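/- arXiv:1912.01976 — 8 statements merged into one kernel-verified Lean document; each statement's English description precedes it below -/
import Mathlib

section
/- Let X be a real Banach space, X₀ ⊆ X a closed subspace, ε₀ > 0, k ≥ 1 an integer, and for each ε ∈ [0, ε₀) let L_ε be a bounded linear operator on X mapping X₀ into X₀, and h_ε ∈ X with L_ε h_ε = h_ε and h_ε − h₀ ∈ X₀. Assume (I − L_ε) restricted to X₀ is a bijection of X₀ whose inverse R_ε satisfies sup_{ε∈[0,ε₀)} ‖R_ε‖ < ∞. Assume there exist G₁, …, G_k ∈ X₀ such that ‖L_ε h₀ − h₀ − Σ_{i=1}^k (εⁱ/i!) G_i‖ = o(ε^k) as ε → 0⁺, and for each 1 ≤ i ≤ k there exist H_{i,0}, …, H_{i,k−i} ∈ X such that ‖R_ε G_i − Σ_{j=0}^{k−i} (ε^j/j!) H_{i,j}‖ = o(ε^{k−i}) as ε → 0⁺. Then ‖h_ε − h₀ − Σ_{n=1}^k (εⁿ/n!) Σ_{i=1}^n binom(n,i) H_{i,n−i}‖ = o(ε^k) as ε → 0⁺. -/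
/-!
Since `h ε - h 0 ∈ X₀` and `(I - L ε) (h ε - h 0) = L ε (h 0) - h 0`, applying `R ε` to the
expansion of `L ε (h 0) - h 0` gives `h ε - h 0 = ∑ (εⁱ / i!) R ε Gᵢ + R ε e_ε`, where the
remainder `e_ε = o(εᵏ)` stays `o(εᵏ)` under `R ε` because `‖R ε‖ ≤ C`. Substituting the
expansions of `R ε Gᵢ` and collecting powers of `ε` in this product of two exponential-type
sums produces the binomial coefficients.
-/

open Filter Topology Asymptotics Finset Nat

theorem pow_div_factorial_mul_pow_sub_div_factorial (x : ℝ) {i n : ℕ} (hi : i ≤ n) :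
    x ^ i / i ! * (x ^ (n - i) / (n - i)!) = x ^ n / n ! * n.choose i := by
  have hfac : (n.choose i * i ! * (n - i)! : ℝ) = n ! := by
    exact_mod_cast choose_mul_factorial_mul_factorial hi
  have hchoose : (n.choose i : ℝ) ≠ 0 := by exact_mod_cast (choose_pos hi).ne'
  rw [← hfac, ← pow_mul_pow_sub x hi]
  field_simp

theorem sum_Icc_pow_div_factorial_smul_sum_range {E : Type*} [AddCommMonoid E] [Module ℝ E]
    (x : ℝ) (k : ℕ) (H : ℕ → ℕ → E) :
    ∑ i ∈ Icc 1 k, (x ^ i / i !) • ∑ j ∈ range (k - i + 1), (x ^ j / j !) • H i j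
      = ∑ n ∈ Icc 1 k, (x ^ n / n !) • ∑ i ∈ Icc 1 n, (n.choose i : ℝ) • H i (n - i) := by
  have hshift : ∀ i ∈ Icc 1 k, ∑ j ∈ range (k - i + 1), (x ^ j / j !) • H i j
      = ∑ n ∈ Ico i (k + 1), (x ^ (n - i) / (n - i)!) • H i (n - i) := by
    intro i hi
    rw [sum_Ico_eq_sum_range, show k + 1 - i = k - i + 1 by grind]
    simp only [Nat.add_sub_cancel_left]
  rw [sum_congr rfl fun i hi => by rw [hshift i hi, smul_sum],
    sum_comm' (t' := Icc 1 k) (s' := fun n => Icc 1 n) fun i n => by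
      simp only [mem_Icc, mem_Ico]; omega]
  refine sum_congr rfl fun n _ => ?_
  rw [smul_sum]
  refine sum_congr rfl fun i hi => ?_
  rw [smul_smul, smul_smul, pow_div_factorial_mul_pow_sub_div_factorial x (mem_Icc.1 hi).2]

theorem isLittleO_pow_iff_tendsto_norm_div {E : Type*} [NormedAddCommGroup E] {f : ℝ → E}
    {m : ℕ} :
    f =o[𝓝[>] 0] (· ^ m) ↔ Tendsto (fun ε => ‖f ε‖ / ε ^ m) (𝓝[>] 0) (𝓝 0) := by
  rw [← isLittleO_norm_left, isLittleO_iff_tendsto']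
  filter_upwards [self_mem_nhdsWithin] with ε (hε : 0 < ε) hε0
  exact absurd hε0 (pow_ne_zero m hε.ne')

theorem norm_sub_sub_sum_resolvent_le {X : Type*} [NormedAddCommGroup X] [NormedSpace ℝ X]
    {X₀ : Submodule ℝ X} {L : X →L[ℝ] X} {R : X₀ →L[ℝ] X₀}
    (hR : ∀ v w : X₀, R w = v ↔ (v : X) - L v = w) (hLmap : ∀ v ∈ X₀, L v ∈ X₀)
    {h₀ h₁ : X} (hfix : L h₁ = h₁) (hdiff : h₁ - h₀ ∈ X₀)
    {ι : Type*} (s : Finset ι) (c : ι → ℝ) (G : ι → X₀) :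
    ‖h₁ - h₀ - ∑ i ∈ s, c i • (R (G i) : X)‖ ≤ ‖R‖ * ‖L h₀ - h₀ - ∑ i ∈ s, c i • (G i : X)‖ := by
  set v : X₀ := ⟨h₁ - h₀, hdiff⟩
  set w : X₀ := ⟨h₁ - h₀ - L (h₁ - h₀), X₀.sub_mem hdiff (hLmap _ hdiff)⟩
  have hRw : R w = v := (hR v w).2 rfl
  set e := w - ∑ i ∈ s, c i • G i
  have he : (e : X) = L h₀ - h₀ - ∑ i ∈ s, c i • (G i : X) := by
    simp [e, w, map_sub, hfix]
  have hRe : (R e : X) = h₁ - h₀ - ∑ i ∈ s, c i • (R (G i) : X) := by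
    simp [e, map_sub, map_sum, hRw, v]
  rw [← hRe, ← he]
  exact R.le_opNorm e

theorem stmt0_general
    {X : Type*} [NormedAddCommGroup X] [NormedSpace ℝ X]
    (X₀ : Submodule ℝ X)
    (ε₀ : ℝ) (hε₀ : 0 < ε₀) (k : ℕ)
    (L : ℝ → X →L[ℝ] X) (h : ℝ → X)
    (hLmap : ∀ ε ∈ Set.Ico (0 : ℝ) ε₀, ∀ v ∈ X₀, L ε v ∈ X₀)
    (hfix : ∀ ε ∈ Set.Ico (0 : ℝ) ε₀, L ε (h ε) = h ε)
    (hdiff : ∀ ε ∈ Set.Ico (0 : ℝ) ε₀, h ε - h 0 ∈ X₀)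
    (R : ℝ → X₀ →L[ℝ] X₀)
    (hR : ∀ ε ∈ Set.Ico (0 : ℝ) ε₀, ∀ v w : X₀, R ε w = v ↔ (v : X) - L ε v = (w : X))
    (C : ℝ) (hC : ∀ ε ∈ Set.Ico (0 : ℝ) ε₀, ‖R ε‖ ≤ C)
    (G : ℕ → X₀)
    (hG : Tendsto (fun ε : ℝ =>
        ‖L ε (h 0) - h 0 -
          ∑ i ∈ Finset.Icc 1 k, (ε ^ i / (Nat.factorial i : ℝ)) • (G i : X)‖ / ε ^ k)
      (𝓝[>] 0) (𝓝 0))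
    (H : ℕ → ℕ → X)
    (hH : ∀ i ∈ Finset.Icc 1 k, Tendsto (fun ε : ℝ =>
        ‖((R ε (G i) : X)) -
          ∑ j ∈ Finset.range (k - i + 1), (ε ^ j / (Nat.factorial j : ℝ)) • H i j‖ / ε ^ (k - i))
      (𝓝[>] 0) (𝓝 0)) :
    Tendsto (fun ε : ℝ =>
        ‖h ε - h 0 - ∑ n ∈ Finset.Icc 1 k, (ε ^ n / (Nat.factorial n : ℝ)) •
            ∑ i ∈ Finset.Icc 1 n, ((n.choose i : ℝ)) • H i (n - i)‖ / ε ^ k)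
      (𝓝[>] 0) (𝓝 0) := by
  have hResolvent : (fun ε => h ε - h 0 - ∑ i ∈ Icc 1 k, (ε ^ i / i !) • (R ε (G i) : X))
      =o[𝓝[>] 0] (· ^ k) := by
    refine (IsBigO.of_bound C ?_).trans_isLittleO (isLittleO_pow_iff_tendsto_norm_div.2 hG)
    filter_upwards [Ioo_mem_nhdsGT hε₀] with ε hε
    have hε' : ε ∈ Set.Ico 0 ε₀ := Set.Ioo_subset_Ico_self hε
    exact (norm_sub_sub_sum_resolvent_le (hR ε hε') (hLmap ε hε') (hfix ε hε') (hdiff ε hε')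
      _ _ _).trans (mul_le_mul_of_nonneg_right (hC ε hε') (norm_nonneg _))
  have hExpansions : (fun ε : ℝ => ∑ i ∈ Icc 1 k, (ε ^ i / i !) •
      ((R ε (G i) : X) - ∑ j ∈ range (k - i + 1), (ε ^ j / j !) • H i j)) =o[𝓝[>] 0] (· ^ k) := by
    refine IsLittleO.fun_sum fun i hi => ?_
    have hcoeff : (fun ε : ℝ => ε ^ i / i !) =O[𝓝[>] 0] (· ^ i) :=
      isBigO_of_le _ fun ε => by
        rw [norm_div, norm_natCast]
        exact div_le_self (norm_nonneg _) (by exact_mod_cast i.factorial_pos)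
    simpa [← pow_add, Nat.add_sub_cancel' (mem_Icc.1 hi).2] using
      hcoeff.smul_isLittleO (isLittleO_pow_iff_tendsto_norm_div.2 (hH i hi))
  refine isLittleO_pow_iff_tendsto_norm_div.1 ((hResolvent.add hExpansions).congr_left fun ε => ?_)
  rw [← sum_Icc_pow_div_factorial_smul_sum_range]
  simp only [smul_sub, sum_sub_distrib]
  abel

/-- **Abstract k-th order approximation theorem** (Theorem 3.1 of the paper):
given a family of bounded operators `L ε` on a Banach space `X` fixing a closed
subspace `X₀`, fixed points `h ε`, uniformly bounded inverses `R ε` of `(I - L ε)`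
on `X₀`, a `k`-th order expansion of `L ε (h 0)` and `(k - i)`-th order expansions
of `R ε (G i)`, one obtains a `k`-th order expansion of `h ε` at `ε = 0⁺`. -/
theorem stmt0
    {X : Type*} [NormedAddCommGroup X] [NormedSpace ℝ X] [CompleteSpace X]
    (X₀ : Submodule ℝ X) (hX₀ : IsClosed (X₀ : Set X))
    (ε₀ : ℝ) (hε₀ : 0 < ε₀) (k : ℕ) (hk : 1 ≤ k)
    (L : ℝ → X →L[ℝ] X) (h : ℝ → X)
    (hLmap : ∀ ε ∈ Set.Ico (0 : ℝ) ε₀, ∀ v ∈ X₀, L ε v ∈ X₀)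
    (hfix : ∀ ε ∈ Set.Ico (0 : ℝ) ε₀, L ε (h ε) = h ε)
    (hdiff : ∀ ε ∈ Set.Ico (0 : ℝ) ε₀, h ε - h 0 ∈ X₀)
    (R : ℝ → X₀ →L[ℝ] X₀)
    (hR : ∀ ε ∈ Set.Ico (0 : ℝ) ε₀, ∀ v w : X₀, R ε w = v ↔ (v : X) - L ε v = (w : X))
    (C : ℝ) (hC : ∀ ε ∈ Set.Ico (0 : ℝ) ε₀, ‖R ε‖ ≤ C)
    (G : ℕ → X₀)
    (hG : Tendsto (fun ε : ℝ =>
        ‖L ε (h 0) - h 0 -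
          ∑ i ∈ Finset.Icc 1 k, (ε ^ i / (Nat.factorial i : ℝ)) • (G i : X)‖ / ε ^ k)
      (𝓝[>] 0) (𝓝 0))
    (H : ℕ → ℕ → X)
    (hH : ∀ i ∈ Finset.Icc 1 k, Tendsto (fun ε : ℝ =>
        ‖((R ε (G i) : X)) -
          ∑ j ∈ Finset.range (k - i + 1), (ε ^ j / (Nat.factorial j : ℝ)) • H i j‖ / ε ^ (k - i))
      (𝓝[>] 0) (𝓝 0)) :
    Tendsto (fun ε : ℝ =>
        ‖h ε - h 0 - ∑ n ∈ Finset.Icc 1 k, (ε ^ n / (Nat.factorial n : ℝ)) •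
            ∑ i ∈ Finset.Icc 1 n, ((n.choose i : ℝ)) • H i (n - i)‖ / ε ^ k)
      (𝓝[>] 0) (𝓝 0) :=
  stmt0_general X₀ ε₀ hε₀ k L h hLmap hfix hdiff R hR C hC G hG H hH
end

section
/- Let X be a real normed space, ε₀ > 0, k ≥ 1 an integer, u : [0, ε₀) → X, and vectors H_{i,j} ∈ X for 1 ≤ i ≤ k, 0 ≤ j ≤ k − i. Suppose there are functions g_i : [0, ε₀) → X with ‖g_i(ε) − Σ_{j=0}^{k−i} (ε^j/j!) H_{i,j}‖ = o(ε^{k−i}) as ε → 0⁺ for each 1 ≤ i ≤ k, and ‖u(ε) − u(0) − Σ_{i=1}^k (εⁱ/i!) g_i(ε)‖ = o(ε^k) as ε → 0⁺. Then ‖u(ε) − u(0) − Σ_{n=1}^k (εⁿ/n!) Σ_{i=1}^n binom(n,i) H_{i,n−i}‖ = o(ε^k) as ε → 0⁺. -/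
open Filter Topology

lemma key_recomb {X : Type*} [AddCommGroup X] [Module ℝ X] (k : ℕ) (ε : ℝ) (H : ℕ → ℕ → X) :
    ∑ i ∈ Finset.Icc 1 k, (ε ^ i / (Nat.factorial i : ℝ)) •
        ∑ j ∈ Finset.range (k - i + 1), (ε ^ j / (Nat.factorial j : ℝ)) • H i j
    = ∑ n ∈ Finset.Icc 1 k, (ε ^ n / (Nat.factorial n : ℝ)) •
        ∑ i ∈ Finset.Icc 1 n, ((n.choose i : ℝ)) • H i (n - i) := by
  simp_rw [Finset.smul_sum, smul_smul]
  rw [Finset.sum_sigma', Finset.sum_sigma']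
  refine Finset.sum_nbij' (fun p => ⟨p.1 + p.2, p.1⟩) (fun p => ⟨p.2, p.1 - p.2⟩) ?_ ?_ ?_ ?_ ?_
  · rintro ⟨i, j⟩ hp
    simp only [Finset.mem_sigma, Finset.mem_Icc, Finset.mem_range] at hp ⊢
    omega
  · rintro ⟨n, i⟩ hp
    simp only [Finset.mem_sigma, Finset.mem_Icc, Finset.mem_range] at hp ⊢
    omega
  · rintro ⟨i, j⟩ hp; simp
  · rintro ⟨n, i⟩ hp
    simp only [Finset.mem_sigma, Finset.mem_Icc] at hp
    simp only [Sigma.mk.inj_iff]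
    constructor
    · omega
    · exact heq_of_eq rfl
  · rintro ⟨i, j⟩ hp
    simp only [Finset.mem_sigma, Finset.mem_Icc, Finset.mem_range] at hp
    dsimp only
    have : (i + j) - i = j := by omega
    rw [this]
    congr 1
    have hfac : ((i + j).choose i : ℝ) * i.factorial * j.factorial = (i + j).factorial := by
      have h := Nat.add_choose_mul_factorial_mul_factorial j i
      rw [Nat.add_comm j i, mul_right_comm] at h
      exact_mod_cast h
    have h1 : (i.factorial : ℝ) ≠ 0 := by positivity
    have h2 : (j.factorial : ℝ) ≠ 0 := by positivity
    have h3 : ((i + j).factorial : ℝ) ≠ 0 := by positivity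
    rw [pow_add]
    field_simp
    rw [← hfac]; ring

/-- **Taylor recombination step**: if `u ε - u 0 = Σ_{i=1}^k (εⁱ/i!) gᵢ(ε) + o(ε^k)`
and each `gᵢ(ε) = Σ_{j=0}^{k-i} (ε^j/j!) H_{i,j} + o(ε^{k-i})` as `ε → 0⁺`, then
`u ε - u 0 = Σ_{n=1}^k (εⁿ/n!) Σ_{i=1}^n C(n,i) H_{i,n-i} + o(ε^k)`. -/
theorem stmt2
    {X : Type*} [NormedAddCommGroup X] [NormedSpace ℝ X]
    (ε₀ : ℝ) (hε₀ : 0 < ε₀) (k : ℕ) (hk : 1 ≤ k)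
    (u : ℝ → X) (H : ℕ → ℕ → X) (g : ℕ → ℝ → X)
    (hg : ∀ i ∈ Finset.Icc 1 k, Tendsto (fun ε : ℝ =>
        ‖g i ε - ∑ j ∈ Finset.range (k - i + 1), (ε ^ j / (Nat.factorial j : ℝ)) • H i j‖ /
          ε ^ (k - i))
      (𝓝[>] 0) (𝓝 0))
    (hu : Tendsto (fun ε : ℝ =>
        ‖u ε - u 0 - ∑ i ∈ Finset.Icc 1 k, (ε ^ i / (Nat.factorial i : ℝ)) • g i ε‖ / ε ^ k)
      (𝓝[>] 0) (𝓝 0)) :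
    Tendsto (fun ε : ℝ =>
        ‖u ε - u 0 - ∑ n ∈ Finset.Icc 1 k, (ε ^ n / (Nat.factorial n : ℝ)) •
            ∑ i ∈ Finset.Icc 1 n, ((n.choose i : ℝ)) • H i (n - i)‖ / ε ^ k)
      (𝓝[>] 0) (𝓝 0) := by
  set A : ℝ → X := fun ε => u ε - u 0 -
    ∑ i ∈ Finset.Icc 1 k, (ε ^ i / (Nat.factorial i : ℝ)) • g i ε with hA
  set B : ℕ → ℝ → X := fun i ε => g i ε -
    ∑ j ∈ Finset.range (k - i + 1), (ε ^ j / (Nat.factorial j : ℝ)) • H i j with hB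
  have hbound : Tendsto (fun ε : ℝ => ‖A ε‖ / ε ^ k +
      ∑ i ∈ Finset.Icc 1 k, (1 / (Nat.factorial i : ℝ)) * (‖B i ε‖ / ε ^ (k - i)))
      (𝓝[>] 0) (𝓝 0) := by
    have h2 : Tendsto (fun ε : ℝ => ∑ i ∈ Finset.Icc 1 k,
        (1 / (Nat.factorial i : ℝ)) * (‖B i ε‖ / ε ^ (k - i))) (𝓝[>] 0) (𝓝 0) := by
      have := tendsto_finset_sum (Finset.Icc 1 k)
        (fun i hi => ((hg i hi).const_mul (1 / (Nat.factorial i : ℝ))))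
      simpa using this
    simpa using hu.add h2
  refine squeeze_zero' ?_ ?_ hbound
  · filter_upwards [self_mem_nhdsWithin] with ε (hε : 0 < ε)
    positivity
  filter_upwards [self_mem_nhdsWithin] with ε (hε : 0 < ε)
  have hFeq : u ε - u 0 - ∑ n ∈ Finset.Icc 1 k, (ε ^ n / (Nat.factorial n : ℝ)) •
        ∑ i ∈ Finset.Icc 1 n, ((n.choose i : ℝ)) • H i (n - i)
      = A ε + ∑ i ∈ Finset.Icc 1 k, (ε ^ i / (Nat.factorial i : ℝ)) • B i ε := by
    rw [← key_recomb k ε H]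
    simp only [hA, hB, smul_sub, Finset.sum_sub_distrib]
    abel
  rw [hFeq]
  have step1 : ‖A ε + ∑ i ∈ Finset.Icc 1 k, (ε ^ i / (Nat.factorial i : ℝ)) • B i ε‖ / ε ^ k ≤
      (‖A ε‖ + ∑ i ∈ Finset.Icc 1 k, ‖(ε ^ i / (Nat.factorial i : ℝ)) • B i ε‖) / ε ^ k := by
    gcongr
    exact (norm_add_le _ _).trans (by gcongr; exact norm_sum_le _ _)
  refine step1.trans ?_
  rw [add_div, Finset.sum_div]
  gcongr with i hi
  simp only [Finset.mem_Icc] at hi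
  have hsplit : ε ^ k = ε ^ i * ε ^ (k - i) := by
    rw [← pow_add]; congr 1; omega
  have h1 : (i.factorial : ℝ) ≠ 0 := by positivity
  have h2 : ε ^ i ≠ 0 := by positivity
  have h3 : ε ^ (k - i) ≠ 0 := by positivity
  refine le_of_eq ?_
  rw [norm_smul, Real.norm_eq_abs, abs_of_nonneg (by positivity), hsplit]
  field_simp
end

section
/- For every integer i ≥ 2, ζ(2i)² − (1 − 2^{−2i}) < 1; consequently Σ_{n=1}^∞ Σ_{k=1}^∞ 1/(nk + 1)^{2i} < 1 for every integer i ≥ 2. -/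
set_option maxHeartbeats 1000000

open Real

/-- **The contraction constant is smaller than one**: for every integer `i ≥ 2`,
`ζ(2i)² - (1 - 2^{-2i}) < 1`, and consequently `Σ_{n,k ≥ 1} 1/(nk+1)^{2i} < 1`,
where `ζ(2i) = Σ_{m ≥ 1} m^{-2i}`. -/
theorem stmt6 (i : ℕ) (hi : 2 ≤ i) :
    (∑' m : ℕ, 1 / ((m : ℝ) + 1) ^ (2 * i)) ^ 2 - (1 - 1 / 2 ^ (2 * i)) < 1 ∧
    Summable (fun p : ℕ × ℕ =>
      1 / (((p.1 : ℝ) + 1) * ((p.2 : ℝ) + 1) + 1) ^ (2 * i)) ∧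
    (∑' p : ℕ × ℕ, 1 / (((p.1 : ℝ) + 1) * ((p.2 : ℝ) + 1) + 1) ^ (2 * i)) < 1 := by
  have h4i : 4 ≤ 2 * i := by omega
  -- summability of the zeta series
  have hsum : Summable (fun m : ℕ => 1 / ((m : ℝ) + 1) ^ (2 * i)) := by
    have h0 : Summable (fun n : ℕ => 1 / (n : ℝ) ^ (2 * i)) :=
      summable_one_div_nat_pow.mpr (by omega)
    have := (summable_nat_add_iff 1).mpr h0
    simpa [Nat.cast_add] using this
  have hsum4 : Summable (fun m : ℕ => 1 / ((m : ℝ) + 1) ^ 4) := by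
    have h0 : Summable (fun n : ℕ => 1 / (n : ℝ) ^ 4) :=
      summable_one_div_nat_pow.mpr (by omega)
    have := (summable_nat_add_iff 1).mpr h0
    simpa [Nat.cast_add] using this
  set S : ℝ := ∑' m : ℕ, 1 / ((m : ℝ) + 1) ^ (2 * i) with hS
  have hS0 : 0 ≤ S := tsum_nonneg (fun m => by positivity)
  -- S ≤ ζ(4) = π^4/90
  have hle4 : S ≤ π ^ 4 / 90 := by
    have h1 : S ≤ ∑' m : ℕ, 1 / ((m : ℝ) + 1) ^ 4 := by
      refine Summable.tsum_le_tsum (fun m => ?_) hsum hsum4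
      refine one_div_le_one_div_of_le (by positivity) ?_
      have h1m : (1:ℝ) ≤ (m:ℝ) + 1 := by
        have := (Nat.cast_nonneg m : (0:ℝ) ≤ m); linarith
      exact pow_le_pow_right₀ h1m h4i
    have h2 : (∑' m : ℕ, 1 / ((m : ℝ) + 1) ^ 4) = π ^ 4 / 90 := by
      have hz := hasSum_zeta_four.tsum_eq
      rw [Summable.tsum_eq_zero_add hasSum_zeta_four.summable] at hz
      simpa [Nat.cast_add] using hz
    linarith
  have hpi4 : π ^ 4 < 99 := by
    have h1 := Real.pi_lt_d2
    have h2 := Real.pi_gt_three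
    have hsq : π ^ 2 < 9.9225 := by nlinarith
    nlinarith [sq_nonneg π]
  have hS11 : S ≤ 11 / 10 := by linarith
  have hpow16 : (16 : ℝ) ≤ 2 ^ (2 * i) := by
    calc (16 : ℝ) = 2 ^ 4 := by norm_num
    _ ≤ 2 ^ (2 * i) := pow_le_pow_right₀ (by norm_num) h4i
  have hinv16 : 1 / 2 ^ (2 * i) ≤ (1 : ℝ) / 16 :=
    one_div_le_one_div_of_le (by norm_num) hpow16
  have part1 : S ^ 2 - (1 - 1 / 2 ^ (2 * i)) < 1 := by
    have : S ^ 2 ≤ (11 / 10) ^ 2 := by nlinarith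
    nlinarith
  refine ⟨part1, ?_⟩
  -- the product series
  set g : ℕ × ℕ → ℝ := fun p =>
    (1 / ((p.1 : ℝ) + 1) ^ (2 * i)) * (1 / ((p.2 : ℝ) + 1) ^ (2 * i)) with hgdef
  have hg : Summable g :=
    hsum.mul_of_nonneg hsum (fun m => by positivity) (fun m => by positivity)
  set f : ℕ × ℕ → ℝ := fun p =>
    1 / (((p.1 : ℝ) + 1) * ((p.2 : ℝ) + 1) + 1) ^ (2 * i) with hfdef
  have hfg : ∀ p, f p ≤ g p := by
    intro p
    have hpos : (0 : ℝ) < ((p.1 : ℝ) + 1) * ((p.2 : ℝ) + 1) := by positivity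
    have : ((p.1 : ℝ) + 1) * ((p.2 : ℝ) + 1) ≤ ((p.1 : ℝ) + 1) * ((p.2 : ℝ) + 1) + 1 := by
      linarith
    have hle : (((p.1 : ℝ) + 1) * ((p.2 : ℝ) + 1)) ^ (2 * i)
        ≤ (((p.1 : ℝ) + 1) * ((p.2 : ℝ) + 1) + 1) ^ (2 * i) :=
      pow_le_pow_left₀ (le_of_lt hpos) this _
    have hgp : g p = 1 / (((p.1 : ℝ) + 1) * ((p.2 : ℝ) + 1)) ^ (2 * i) := by
      show (1 / ((p.1 : ℝ) + 1) ^ (2 * i)) * (1 / ((p.2 : ℝ) + 1) ^ (2 * i)) = _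
      rw [div_mul_div_comm, one_mul, mul_pow]
    rw [hgp]
    exact one_div_le_one_div_of_le (by positivity) hle
  have hf : Summable f :=
    Summable.of_nonneg_of_le (fun p => by positivity) hfg hg
  refine ⟨hf, ?_⟩
  -- tsum g = S^2
  have htg : ∑' p, g p = S ^ 2 := by
    have := (hsum.hasSum.mul hsum.hasSum hg).tsum_eq
    rw [this]; ring
  -- split off the (0,0) term
  classical
  have hsplitf := Summable.tsum_eq_add_tsum_ite hf ((0, 0) : ℕ × ℕ)
  have hsplitg := Summable.tsum_eq_add_tsum_ite hg ((0, 0) : ℕ × ℕ)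
  have hfpos : ∀ p, 0 ≤ f p := fun p => by simp only [hfdef]; positivity
  have hgpos : ∀ p, 0 ≤ g p := fun p => by simp only [hgdef]; positivity
  have hitele : (∑' p : ℕ × ℕ, if p = ((0, 0) : ℕ × ℕ) then 0 else f p)
      ≤ ∑' p : ℕ × ℕ, if p = ((0, 0) : ℕ × ℕ) then 0 else g p := by
    refine Summable.tsum_le_tsum (fun p => ?_) ?_ ?_
    · by_cases h : p = ((0, 0) : ℕ × ℕ)
      · rw [if_pos h, if_pos h]
      · rw [if_neg h, if_neg h]; exact hfg p
    · refine Summable.of_nonneg_of_le (fun p => ?_) (fun p => ?_) hg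
      · by_cases h : p = ((0, 0) : ℕ × ℕ)
        · rw [if_pos h]
        · rw [if_neg h]; exact hfpos p
      · by_cases h : p = ((0, 0) : ℕ × ℕ)
        · rw [if_pos h]; exact hgpos p
        · rw [if_neg h]; exact hfg p
    · refine Summable.of_nonneg_of_le (fun p => ?_) (fun p => ?_) hg
      · by_cases h : p = ((0, 0) : ℕ × ℕ)
        · rw [if_pos h]
        · rw [if_neg h]; exact hgpos p
      · by_cases h : p = ((0, 0) : ℕ × ℕ)
        · rw [if_pos h]; exact hgpos p
        · rw [if_neg h]
  have hf00 : f ((0, 0) : ℕ × ℕ) = 1 / 2 ^ (2 * i) := by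
    simp [hfdef]; norm_num
  have hg00 : g ((0, 0) : ℕ × ℕ) = 1 := by
    simp [hgdef]
  have : ∑' p, f p ≤ 1 / 2 ^ (2 * i) + (S ^ 2 - 1) := by
    have hgite : (∑' p : ℕ × ℕ, if p = ((0, 0) : ℕ × ℕ) then 0 else g p)
        = S ^ 2 - 1 := by
      have := hsplitg
      rw [htg, hg00] at this
      linarith
    rw [hsplitf, hf00]
    linarith [hitele, hgite.le, hgite.ge]
  linarith
end

section
/- For every integer j ≥ 2 and every x ∈ [0,1], the double series Σ_{n=1}^∞ Σ_{k=1}^∞ n^{j−1}/(n(k + x) + 1)^{j+1} converges and satisfies Σ_{n=1}^∞ Σ_{k=1}^∞ n^{j−1}/(n(k + x) + 1)^{j+1} ≤ π⁴/36. -/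
open Real

lemma basel' : HasSum (fun n : ℕ => (1 : ℝ) / ((n : ℝ) + 1) ^ 2) (π ^ 2 / 6) := by
  have h2 : HasSum (fun n : ℕ => (1 : ℝ) / ((n + 1 : ℕ) : ℝ) ^ 2) (π ^ 2 / 6) :=
    (hasSum_nat_add_iff (f := fun n : ℕ => (1 : ℝ) / (n : ℝ) ^ 2) 1).mpr
      (by simpa using hasSum_zeta_two)
  have : ∀ n : ℕ, (1 : ℝ) / ((n + 1 : ℕ) : ℝ) ^ 2 = 1 / ((n : ℝ) + 1) ^ 2 := by
    intro n; push_cast; ring_nf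
  simpa [this] using h2

set_option maxHeartbeats 1000000 in
/-- **Uniform bound on the `j`-th derivative sums for the Gauss branches**:
for every integer `j ≥ 2` and `x ∈ [0,1]`,
`Σ_{n,k ≥ 1} n^{j-1}/(n(k+x)+1)^{j+1}` converges and is at most `π⁴/36`. -/
theorem stmt8 (j : ℕ) (hj : 2 ≤ j) (x : ℝ) (hx : x ∈ Set.Icc (0 : ℝ) 1) :
    Summable (fun p : ℕ × ℕ =>
      ((p.1 : ℝ) + 1) ^ (j - 1) /
        (((p.1 : ℝ) + 1) * (((p.2 : ℝ) + 1) + x) + 1) ^ (j + 1)) ∧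
    (∑' p : ℕ × ℕ, ((p.1 : ℝ) + 1) ^ (j - 1) /
        (((p.1 : ℝ) + 1) * (((p.2 : ℝ) + 1) + x) + 1) ^ (j + 1)) ≤ π ^ 4 / 36 := by
  obtain ⟨hx0, hx1⟩ := hx
  set f := fun p : ℕ × ℕ =>
      ((p.1 : ℝ) + 1) ^ (j - 1) /
        (((p.1 : ℝ) + 1) * (((p.2 : ℝ) + 1) + x) + 1) ^ (j + 1) with hf
  set g := fun p : ℕ × ℕ => (1 : ℝ) / ((p.1 : ℝ) + 1) ^ 2 * ((1 : ℝ) / ((p.2 : ℝ) + 1) ^ 2)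
    with hg
  have hgsum : Summable g := basel'.summable.mul_of_nonneg basel'.summable
    (fun n => by positivity) (fun n => by positivity)
  have hgs : HasSum g (π ^ 2 / 6 * (π ^ 2 / 6)) := by
    have := basel'.mul_eq basel' hgsum.hasSum
    rw [this]; exact hgsum.hasSum
  have hfnn : ∀ p : ℕ × ℕ, 0 ≤ f p := fun p => by
    have : (0:ℝ) < ((p.1 : ℝ) + 1) * (((p.2 : ℝ) + 1) + x) + 1 := by positivity
    positivity
  have hle : ∀ p : ℕ × ℕ, f p ≤ g p := by
    intro p
    set n : ℝ := (p.1 : ℝ) + 1 with hn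
    set k : ℝ := (p.2 : ℝ) + 1 with hk
    have hn1 : (1:ℝ) ≤ n := by have := Nat.cast_nonneg (α := ℝ) p.1; simp [hn]
    have hk1 : (1:ℝ) ≤ k := by have := Nat.cast_nonneg (α := ℝ) p.2; simp [hk]
    set D : ℝ := n * (k + x) + 1 with hD
    have hDpos : 0 < D := by positivity
    have hnD : n ≤ D := by nlinarith
    have hnkD : n * k ≤ D := by nlinarith
    have key : n ^ (j - 1) * (n ^ 2 * k ^ 2) ≤ D ^ (j + 1) := by
      have h1 : n ^ (j - 1) ≤ D ^ (j - 1) :=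
        pow_le_pow_left₀ (by linarith) hnD _
      have h2 : (n * k) ^ 2 ≤ D ^ 2 := pow_le_pow_left₀ (by nlinarith) hnkD _
      have h3 : D ^ (j + 1) = D ^ (j - 1) * D ^ 2 := by
        rw [← pow_add]; congr 1; omega
      calc n ^ (j - 1) * (n ^ 2 * k ^ 2) = n ^ (j - 1) * (n * k) ^ 2 := by ring
        _ ≤ D ^ (j - 1) * D ^ 2 := mul_le_mul h1 h2 (by positivity) (by positivity)
        _ = D ^ (j + 1) := h3.symm
    have : f p = n ^ (j - 1) / D ^ (j + 1) := rfl
    rw [this]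
    have hgp : g p = 1 / (n ^ 2 * k ^ 2) := by
      simp [hg, hn, hk]; ring
    rw [hgp, div_le_div_iff₀ (by positivity) (by positivity)]
    nlinarith [key]
  have hsum : Summable f := Summable.of_nonneg_of_le hfnn hle hgs.summable
  refine ⟨hsum, ?_⟩
  calc ∑' p, f p ≤ ∑' p, g p := Summable.tsum_le_tsum hle hsum hgs.summable
    _ = π ^ 2 / 6 * (π ^ 2 / 6) := hgs.tsum_eq
    _ = π ^ 4 / 36 := by ring
end

section
/- For every integer j ≥ 2 and every x ∈ [0,1], the double series Σ_{n=1}^∞ Σ_{k=1}^∞ (n+1)^{j−1}/((n+1)(k + x) + 1)^{j+1} converges and satisfies Σ_{n=1}^∞ Σ_{k=1}^∞ (n+1)^{j−1}/((n+1)(k + x) + 1)^{j+1} ≤ π⁴/36. -/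
open Real

/-
With `a = n + 2` and `c = k + 1 ≥ 1`, the denominator dominates `(a c)^(j+1)`, so the `(n, k)` term is
at most `1 / (a² c^(j+1)) ≤ 1 / ((n+1)² (k+1)²)`. The double series is therefore dominated
termwise by the product series `(∑ 1/(n+1)²)(∑ 1/(k+1)²) = ζ(2)² = π⁴/36`.
-/

lemma hasSum_one_div_nat_add_one_sq :
    HasSum (fun n : ℕ => 1 / ((n : ℝ) + 1) ^ 2) (π ^ 2 / 6) := by
  simpa using (hasSum_nat_add_iff' (f := fun n : ℕ => (1 : ℝ) / (n : ℝ) ^ 2) 1).mpr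
    hasSum_zeta_two

lemma hasSum_one_div_sq_mul_one_div_sq :
    HasSum (fun p : ℕ × ℕ => 1 / ((p.1 : ℝ) + 1) ^ 2 * (1 / ((p.2 : ℝ) + 1) ^ 2)) (π ^ 4 / 36) := by
  set f : ℕ → ℝ := fun n => 1 / ((n : ℝ) + 1) ^ 2
  have hf : HasSum f (π ^ 2 / 6) := hasSum_one_div_nat_add_one_sq
  have hf0 : 0 ≤ f := fun _ => by positivity
  have hsq : π ^ 4 / 36 = π ^ 2 / 6 * (π ^ 2 / 6) := by ring
  rw [hsq]
  exact hf.mul hf (hf.summable.mul_of_nonneg hf.summable hf0 hf0)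

lemma pow_div_mul_add_one_pow_le {a c x : ℝ} {j : ℕ} (ha : 0 < a) (hc : 1 ≤ c) (hx : 0 ≤ x)
    (hj : 1 ≤ j) : a ^ (j - 1) / (a * (c + x) + 1) ^ (j + 1) ≤ 1 / a ^ 2 * (1 / c ^ 2) := by
  calc a ^ (j - 1) / (a * (c + x) + 1) ^ (j + 1)
      ≤ a ^ (j - 1) / (a * c) ^ (j + 1) := by
        gcongr
        nlinarith
    _ = 1 / a ^ 2 * (1 / c ^ (j + 1)) := by
        obtain ⟨i, rfl⟩ : ∃ i, j = i + 1 := ⟨j - 1, by omega⟩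
        rw [Nat.add_sub_cancel, mul_pow]
        field_simp
        ring
    _ ≤ 1 / a ^ 2 * (1 / c ^ 2) := by
        gcongr
        omega

/-- **Uniform bound on the `j`-th derivative sums for the Rényi branches**:
for every integer `j ≥ 2` and `x ∈ [0,1]`,
`Σ_{n,k ≥ 1} (n+1)^{j-1}/((n+1)(k+x)+1)^{j+1}` converges and is at most `π⁴/36`. -/
theorem stmt9 (j : ℕ) (hj : 2 ≤ j) (x : ℝ) (hx : x ∈ Set.Icc (0 : ℝ) 1) :
    Summable (fun p : ℕ × ℕ =>
      (((p.1 : ℝ) + 1) + 1) ^ (j - 1) /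
        ((((p.1 : ℝ) + 1) + 1) * (((p.2 : ℝ) + 1) + x) + 1) ^ (j + 1)) ∧
    (∑' p : ℕ × ℕ, (((p.1 : ℝ) + 1) + 1) ^ (j - 1) /
        ((((p.1 : ℝ) + 1) + 1) * (((p.2 : ℝ) + 1) + x) + 1) ^ (j + 1)) ≤ π ^ 4 / 36 := by
  have hG := hasSum_one_div_sq_mul_one_div_sq
  have hle : ∀ p : ℕ × ℕ, (((p.1 : ℝ) + 1) + 1) ^ (j - 1) /
      ((((p.1 : ℝ) + 1) + 1) * (((p.2 : ℝ) + 1) + x) + 1) ^ (j + 1) ≤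
        1 / ((p.1 : ℝ) + 1) ^ 2 * (1 / ((p.2 : ℝ) + 1) ^ 2) := fun p =>
    (pow_div_mul_add_one_pow_le (by positivity) (by simp) hx.1 (by omega)).trans
      (by gcongr; linarith)
  have hx0 := hx.1
  have hF := hG.summable.of_nonneg_of_le (fun _ => by positivity) hle
  exact ⟨hF, (hF.tsum_le_tsum hle hG.summable).trans hG.tsum_eq.le⟩
end

section
/- Fix an integer l ≥ 0 and let f ∈ C^l([0,1]). Then the series Σ_{a=1}^∞ (a+x)^{−2} f(1/(a+x)) and Σ_{a=1}^∞ (a+x)^{−2} f(1 − 1/(a+x)) converge uniformly on [0,1]; their sums L₀f and L₁f belong to C^l([0,1]); and for every 0 ≤ i ≤ l the i-th derivatives are obtained by termwise differentiation: (L₀f)^{(i)}(x) = Σ_{a=1}^∞ (d/dx)^i[(a+x)^{−2} f(1/(a+x))] and (L₁f)^{(i)}(x) = Σ_{a=1}^∞ (d/dx)^i[(a+x)^{−2} f(1 − 1/(a+x))], both series converging uniformly on [0,1]. -/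
/-!
Extend `f` to a `C^l` function `F` on `ℝ`. On `[0,1]` the `a`-th term of either series is
`g ((a+1+x)⁻¹)` with `g z = z² F z`, resp. `g z = z² F (1 - z)`. Differentiating in `x` turns
`g ((c+x)⁻¹)` into `(D g) ((c+x)⁻¹)` with `D g z = -z² g' z`, so the `i`-th derivative of the
`a`-th term is `(Dⁱ g) ((a+1+x)⁻¹)`. For `i ≤ l`, `Dⁱ g z` is `z²` times a continuous function,
hence `O((a+1)⁻²)` uniformly for `x > -1/2`; these summable bounds allow termwise
differentiation up to order `l` on the open set `x > -1/2`, and then within `[0,1]`.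
-/

open Filter Topology

/-- The Gauss transfer operator `(L₀ f)(x) = Σ_{a ≥ 1} (a+x)⁻² f(1/(a+x))`. -/
noncomputable def gaussOp (f : ℝ → ℝ) : ℝ → ℝ :=
  fun x => ∑' a : ℕ, (1 / (((a : ℝ) + 1) + x) ^ 2) * f (1 / (((a : ℝ) + 1) + x))

/-- The Rényi transfer operator `(L₁ f)(x) = Σ_{a ≥ 1} (a+x)⁻² f(1 - 1/(a+x))`. -/
noncomputable def renyiOp (f : ℝ → ℝ) : ℝ → ℝ :=
  fun x => ∑' a : ℕ, (1 / (((a : ℝ) + 1) + x) ^ 2) * f (1 - 1 / (((a : ℝ) + 1) + x))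

open Set

theorem ContDiffOn.exists_contDiff_eqOn_Icc {a b : ℝ} (hab : a < b) {n : ℕ} {f : ℝ → ℝ}
    (hf : ContDiffOn ℝ n f (Icc a b)) : ∃ F : ℝ → ℝ, ContDiff ℝ n F ∧ EqOn F f (Icc a b) := by
  induction n generalizing f with
  | zero =>
    refine ⟨IccExtend hab.le (domRestrict (Icc a b) f), ?_, fun x hx => IccExtend_of_mem _ _ hx⟩
    rw [Nat.cast_zero, contDiff_zero]
    exact hf.continuousOn.domRestrict.Icc_extend'
  | succ n ih =>
    have hs : UniqueDiffOn ℝ (Icc a b) := uniqueDiffOn_Icc hab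
    obtain ⟨G, hG, hGf⟩ := ih (hf.derivWithin hs (by push_cast; rfl))
    have hF : ∀ x, HasDerivAt (fun x => f a + ∫ t in a..x, G t) (G x) x := fun x =>
      (hG.continuous.integral_hasStrictDerivAt a x).hasDerivAt.const_add _
    refine ⟨fun x => f a + ∫ t in a..x, G t, ?_, ?_⟩
    · rw [Nat.cast_succ, contDiff_succ_iff_deriv, funext fun x => (hF x).deriv]
      exact ⟨fun x => (hF x).differentiableAt, by simp, hG⟩
    · refine fun y hy => eq_of_derivWithin_eq
        (fun x _ => (hF x).differentiableAt.differentiableWithinAt)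
        (hf.differentiableOn (by simp)) (fun x hx => ?_) (by simp) y hy
      have hx' := Ico_subset_Icc_self hx
      rw [(hF x).hasDerivWithinAt.derivWithin (hs x hx'), hGf hx']

section DerivTower

variable {s : Set ℝ} {n : ℕ} {h : ℕ → ℝ → ℝ}

theorem iteratedDerivWithin_eqOn_of_hasDerivWithinAt (hs : UniqueDiffOn ℝ s)
    (hd : ∀ i < n, ∀ x ∈ s, HasDerivWithinAt (h i) (h (i + 1) x) s x) :
    ∀ i ≤ n, EqOn (iteratedDerivWithin i (h 0) s) (h i) s := by
  intro i hi
  induction i with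
  | zero => simp [eqOn_refl]
  | succ i ih =>
    intro x hx
    rw [iteratedDerivWithin_succ, derivWithin_congr (ih (by omega)) (ih (by omega) hx)]
    exact (hd i (by omega) x hx).derivWithin (hs x hx)

theorem contDiffOn_of_hasDerivWithinAt (hs : UniqueDiffOn ℝ s)
    (hd : ∀ i < n, ∀ x ∈ s, HasDerivWithinAt (h i) (h (i + 1) x) s x)
    (hc : ContinuousOn (h n) s) : ContDiffOn ℝ n (h 0) s := by
  induction n generalizing h with
  | zero => simpa using hc
  | succ n ih =>
    rw [Nat.cast_succ, contDiffOn_succ_iff_derivWithin hs]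
    refine ⟨fun x hx => (hd 0 n.succ_pos x hx).differentiableWithinAt, by simp, ?_⟩
    refine (ih (h := fun i => h (i + 1)) (fun i hi x hx => hd (i + 1) (by omega) x hx) hc).congr
      fun x hx => (hd 0 n.succ_pos x hx).derivWithin (hs x hx)

end DerivTower

def TermwiseContDiffOn (n : ℕ) (T : ℕ → ℝ → ℝ) (s : Set ℝ) : Prop :=
  ContDiffOn ℝ n (fun x => ∑' a, T a x) s ∧
  (∀ i ≤ n, ∀ x ∈ s, iteratedDerivWithin i (fun x => ∑' a, T a x) s x =
    ∑' a, iteratedDerivWithin i (T a) s x) ∧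
  (∀ i ≤ n, TendstoUniformlyOn
    (fun N x => ∑ a ∈ Finset.range N, iteratedDerivWithin i (T a) s x)
    (iteratedDerivWithin i (fun x => ∑' a, T a x) s) atTop s)

namespace TermwiseContDiffOn

variable {n : ℕ} {T T' : ℕ → ℝ → ℝ} {s : Set ℝ}

theorem tendstoUniformlyOn (h : TermwiseContDiffOn n T s) :
    TendstoUniformlyOn (fun N x => ∑ a ∈ Finset.range N, T a x) (fun x => ∑' a, T a x)
      atTop s := by
  simpa using h.2.2 0 n.zero_le

theorem congr (h : TermwiseContDiffOn n T s) (hT : ∀ a, EqOn (T' a) (T a) s) :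
    TermwiseContDiffOn n T' s := by
  obtain ⟨hS, hderiv, hunif⟩ := h
  have hsum : EqOn (fun x => ∑' a, T' a x) (fun x => ∑' a, T a x) s :=
    fun x hx => tsum_congr fun a => hT a hx
  have hterm : ∀ i a, EqOn (iteratedDerivWithin i (T' a) s) (iteratedDerivWithin i (T a) s) s :=
    fun i a => iteratedDerivWithin_congr (hT a)
  refine ⟨hS.congr hsum, fun i hi x hx => ?_, fun i hi => ?_⟩
  · rw [iteratedDerivWithin_congr hsum hx, hderiv i hi x hx]
    exact tsum_congr fun a => (hterm i a hx).symm
  · refine ((hunif i hi).congr (Eventually.of_forall fun N x hx => ?_)).congr_right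
      fun x hx => (iteratedDerivWithin_congr hsum hx).symm
    exact Finset.sum_congr rfl fun a _ => (hterm i a hx).symm

end TermwiseContDiffOn

theorem termwiseContDiffOn_of_hasDerivAt {U s : Set ℝ} (hU : IsOpen U)
    (hU' : IsPreconnected U) (hsU : s ⊆ U) (hs : UniqueDiffOn ℝ s) {n : ℕ}
    {h : ℕ → ℕ → ℝ → ℝ}
    (hbound : ∀ i ≤ n, ∃ u : ℕ → ℝ, Summable u ∧ ∀ a, ∀ x ∈ U, ‖h i a x‖ ≤ u a)
    (hd : ∀ i < n, ∀ a, ∀ x ∈ U, HasDerivAt (h i a) (h (i + 1) a x) x)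
    (hc : ∀ a, ContinuousOn (h n a) s) :
    TermwiseContDiffOn n (h 0) s := by
  have hD : ∀ i < n, ∀ x ∈ s,
      HasDerivWithinAt (fun y => ∑' a, h i a y) (∑' a, h (i + 1) a x) s x := by
    intro i hi x hx
    obtain ⟨u, hu, hhu⟩ := hbound i hi.le
    obtain ⟨u', hu', hhu'⟩ := hbound (i + 1) hi
    exact (hasDerivAt_tsum_of_isPreconnected hu' hU hU' (hd i hi) hhu' (hsU hx)
      (.of_norm_bounded hu fun a => hhu a x (hsU hx)) (hsU hx)).hasDerivWithinAt
  have hsum :=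
    iteratedDerivWithin_eqOn_of_hasDerivWithinAt (h := fun i y => ∑' a, h i a y) hs hD
  have hterm : ∀ a, ∀ i ≤ n, EqOn (iteratedDerivWithin i (h 0 a) s) (h i a) s := fun a =>
    iteratedDerivWithin_eqOn_of_hasDerivWithinAt (h := fun i => h i a) hs
      fun i hi x hx => (hd i hi a x (hsU hx)).hasDerivWithinAt
  refine ⟨?_, fun i hi x hx => ?_, fun i hi => ?_⟩
  · obtain ⟨u, hu, hhu⟩ := hbound n le_rfl
    exact contDiffOn_of_hasDerivWithinAt (h := fun i y => ∑' a, h i a y) hs hD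
      (continuousOn_tsum hc hu fun a x hx => hhu a x (hsU hx))
  · rw [hsum i hi hx]
    exact tsum_congr fun a => (hterm a i hi hx).symm
  · obtain ⟨u, hu, hhu⟩ := hbound i hi
    refine (((tendstoUniformlyOn_tsum_nat hu hhu).mono hsU).congr
      (Eventually.of_forall fun N x hx => ?_)).congr_right fun x hx => (hsum i hi hx).symm
    exact Finset.sum_congr rfl fun a _ => (hterm a i hi hx).symm

noncomputable def invDeriv (g : ℝ → ℝ) (z : ℝ) : ℝ := -(z ^ 2 * deriv g z)

section invDeriv

variable {g : ℝ → ℝ}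

theorem hasDerivAt_comp_inv_add {c x : ℝ} (hg : DifferentiableAt ℝ g (c + x)⁻¹)
    (hx : c + x ≠ 0) : HasDerivAt (fun y => g (c + y)⁻¹) (invDeriv g (c + x)⁻¹) x := by
  refine (hg.hasDerivAt.comp x (((hasDerivAt_id x).const_add c).inv hx)).congr_deriv ?_
  simp only [invDeriv, id, inv_pow]
  ring

theorem contDiff_invDeriv {n : ℕ} (hg : ContDiff ℝ (n + 1) g) : ContDiff ℝ n (invDeriv g) :=
  ((contDiff_id.pow 2).mul (contDiff_succ_iff_deriv.mp hg).2.2).neg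

theorem contDiff_iterate_invDeriv {l i : ℕ} (hg : ContDiff ℝ l g) (hi : i ≤ l) :
    ContDiff ℝ (l - i : ℕ) (invDeriv^[i] g) := by
  induction i with
  | zero => simpa using hg
  | succ i ih =>
    rw [Function.iterate_succ_apply']
    have hli : l - i = l - (i + 1) + 1 := by omega
    exact contDiff_invDeriv (by rw [← Nat.cast_add_one, ← hli]; exact ih (by omega))

theorem IsCompact.exists_bound_invDeriv {k : Set ℝ} (hk : IsCompact k) (hg : ContDiff ℝ 1 g) :
    ∃ C, ∀ z ∈ k, ‖invDeriv g z‖ ≤ C * z ^ 2 := by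
  obtain ⟨C, hC⟩ := hk.exists_bound_of_continuousOn (hg.continuous_deriv le_rfl).continuousOn
  refine ⟨C, fun z hz => ?_⟩
  rw [invDeriv, norm_neg, norm_mul, norm_pow, Real.norm_eq_abs, sq_abs, mul_comm]
  exact mul_le_mul_of_nonneg_right (hC z hz) (sq_nonneg z)

end invDeriv

theorem exists_bound_iterate_invDeriv_sq_mul {l i : ℕ} {Q : ℝ → ℝ} {k : Set ℝ}
    (hk : IsCompact k) (hQ : ContDiff ℝ l Q) (hi : i ≤ l) :
    ∃ C, ∀ z ∈ k, ‖invDeriv^[i] (fun z => z ^ 2 * Q z) z‖ ≤ C * z ^ 2 := by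
  cases i with
  | zero =>
    obtain ⟨C, hC⟩ := hk.exists_bound_of_continuousOn hQ.continuous.continuousOn
    refine ⟨C, fun z hz => ?_⟩
    rw [Function.iterate_zero_apply, norm_mul, norm_pow, Real.norm_eq_abs, sq_abs, mul_comm]
    exact mul_le_mul_of_nonneg_right (hC z hz) (sq_nonneg z)
  | succ i =>
    rw [Function.iterate_succ']
    refine hk.exists_bound_invDeriv ((contDiff_iterate_invDeriv ((contDiff_id.pow 2).mul hQ)
      (by omega : i ≤ l)).of_le ?_)
    exact_mod_cast (by omega : 1 ≤ l - i)

theorem summable_one_div_natCast_add_one_sq :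
    Summable fun a : ℕ => 1 / ((a : ℝ) + 1) ^ 2 := by
  simpa using (summable_nat_add_iff 1).mpr (Real.summable_one_div_nat_pow.mpr one_lt_two)

/-- The terms of `gaussOp f` and `renyiOp f` are `transferTerm f` and `transferTerm (f (1 - ·))`. -/
noncomputable def transferTerm (q : ℝ → ℝ) (a : ℕ) (x : ℝ) : ℝ :=
  (1 / (((a : ℝ) + 1) + x) ^ 2) * q (1 / (((a : ℝ) + 1) + x))

theorem transferTerm_eq_comp (q : ℝ → ℝ) (a : ℕ) :
    transferTerm q a = fun x => (fun z => z ^ 2 * q z) ((a + 1 + x)⁻¹) := by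
  ext x
  simp [transferTerm, inv_pow]

theorem inv_natCast_add_one_add_le {a : ℕ} {x : ℝ} (hx : -1 / 2 < x) :
    0 < ((a : ℝ) + 1 + x)⁻¹ ∧ ((a : ℝ) + 1 + x)⁻¹ ≤ 2 / ((a : ℝ) + 1) := by
  have ha : (0 : ℝ) ≤ a := a.cast_nonneg
  have hpos : 0 < (a : ℝ) + 1 + x := by linarith
  refine ⟨inv_pos.mpr hpos, ?_⟩
  rw [inv_le_iff_one_le_mul₀ hpos, div_mul_eq_mul_div, le_div_iff₀ (by positivity)]
  linarith

theorem termwiseContDiffOn_transferTerm_of_contDiff {l : ℕ} {Q : ℝ → ℝ} (hQ : ContDiff ℝ l Q)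
    {s : Set ℝ} (hs : UniqueDiffOn ℝ s) (hsU : s ⊆ Ioi (-1 / 2)) :
    TermwiseContDiffOn l (transferTerm Q) s := by
  set g : ℝ → ℝ := fun z => z ^ 2 * Q z
  have hg : ContDiff ℝ l g := (contDiff_id.pow 2).mul hQ
  have hne : ∀ a : ℕ, ∀ x ∈ Ioi (-1 / 2 : ℝ), (a : ℝ) + 1 + x ≠ 0 := fun a x hx =>
    (inv_pos.mp (inv_natCast_add_one_add_le hx).1).ne'
  have hT : transferTerm Q = fun (a : ℕ) x => invDeriv^[0] g ((a + 1 + x)⁻¹) :=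
    funext (transferTerm_eq_comp Q)
  rw [hT]
  refine termwiseContDiffOn_of_hasDerivAt isOpen_Ioi isPreconnected_Ioi hsU hs
    (h := fun i (a : ℕ) x => invDeriv^[i] g ((a + 1 + x)⁻¹))
    (fun i hi => ?_) (fun i hi a x hx => ?_) (fun a => ?_)
  · obtain ⟨C, hC⟩ := exists_bound_iterate_invDeriv_sq_mul isCompact_Icc hQ hi (k := Icc 0 2)
    refine ⟨fun a => |C| * (4 * (1 / ((a : ℝ) + 1) ^ 2)),
      (summable_one_div_natCast_add_one_sq.mul_left 4).mul_left |C|, fun a x hx => ?_⟩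
    obtain ⟨hz0, hz2⟩ := inv_natCast_add_one_add_le (a := a) hx
    have hz : ((a : ℝ) + 1 + x)⁻¹ ∈ Icc (0 : ℝ) 2 :=
      ⟨hz0.le, hz2.trans (div_le_self zero_le_two (by simp))⟩
    calc ‖invDeriv^[i] g ((a + 1 + x)⁻¹)‖ ≤ C * ((a + 1 + x)⁻¹) ^ 2 := hC _ hz
      _ ≤ |C| * (2 / ((a : ℝ) + 1)) ^ 2 := by gcongr; exact le_abs_self C
      _ = |C| * (4 * (1 / ((a : ℝ) + 1) ^ 2)) := by rw [div_pow]; ring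
  · rw [Function.iterate_succ_apply']
    refine hasDerivAt_comp_inv_add (((contDiff_iterate_invDeriv hg hi.le).differentiable ?_) _)
      (hne a x hx)
    exact_mod_cast (by omega : l - i ≠ 0)
  · have hcont : Continuous (invDeriv^[l] g) := by
      simpa using (contDiff_iterate_invDeriv hg le_rfl).continuous
    exact hcont.comp_continuousOn (((continuousOn_const.add continuousOn_id).inv₀
      fun x hx => hne a x (hsU hx)))

theorem termwiseContDiffOn_transferTerm {l : ℕ} {q : ℝ → ℝ}
    (hq : ContDiffOn ℝ l q (Icc 0 1)) : TermwiseContDiffOn l (transferTerm q) (Icc 0 1) := by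
  obtain ⟨Q, hQ, hQq⟩ := hq.exists_contDiff_eqOn_Icc zero_lt_one
  refine (termwiseContDiffOn_transferTerm_of_contDiff hQ (uniqueDiffOn_Icc zero_lt_one)
    fun x hx => ?_).congr fun a x hx => ?_
  · exact mem_Ioi.2 (by linarith [hx.1])
  · have hc : 1 ≤ (a : ℝ) + 1 + x := by linarith [a.cast_nonneg (α := ℝ), hx.1]
    simp only [transferTerm]
    rw [hQq ⟨by positivity, div_le_one_of_le₀ hc (by linarith)⟩]

/-- **Regularity of the Gauss and Rényi transfer operators on `C^l([0,1])`**: the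
defining series converge uniformly on `[0,1]`, the sums `L₀ f` and `L₁ f` are `C^l`
on `[0,1]`, and for every `i ≤ l` the `i`-th derivatives are obtained by termwise
differentiation, the differentiated series converging uniformly on `[0,1]`. -/
theorem stmt10 (l : ℕ) (f : ℝ → ℝ) (hf : ContDiffOn ℝ l f (Set.Icc (0 : ℝ) 1)) :
    TendstoUniformlyOn
      (fun (N : ℕ) (x : ℝ) => ∑ a ∈ Finset.range N,
        (1 / (((a : ℝ) + 1) + x) ^ 2) * f (1 / (((a : ℝ) + 1) + x)))
      (gaussOp f) atTop (Set.Icc (0 : ℝ) 1) ∧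
    TendstoUniformlyOn
      (fun (N : ℕ) (x : ℝ) => ∑ a ∈ Finset.range N,
        (1 / (((a : ℝ) + 1) + x) ^ 2) * f (1 - 1 / (((a : ℝ) + 1) + x)))
      (renyiOp f) atTop (Set.Icc (0 : ℝ) 1) ∧
    ContDiffOn ℝ l (gaussOp f) (Set.Icc (0 : ℝ) 1) ∧
    ContDiffOn ℝ l (renyiOp f) (Set.Icc (0 : ℝ) 1) ∧
    (∀ i ≤ l, ∀ x ∈ Set.Icc (0 : ℝ) 1,
      iteratedDerivWithin i (gaussOp f) (Set.Icc (0 : ℝ) 1) x =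
        ∑' a : ℕ, iteratedDerivWithin i
          (fun y => (1 / (((a : ℝ) + 1) + y) ^ 2) * f (1 / (((a : ℝ) + 1) + y)))
          (Set.Icc (0 : ℝ) 1) x) ∧
    (∀ i ≤ l, ∀ x ∈ Set.Icc (0 : ℝ) 1,
      iteratedDerivWithin i (renyiOp f) (Set.Icc (0 : ℝ) 1) x =
        ∑' a : ℕ, iteratedDerivWithin i
          (fun y => (1 / (((a : ℝ) + 1) + y) ^ 2) * f (1 - 1 / (((a : ℝ) + 1) + y)))
          (Set.Icc (0 : ℝ) 1) x) ∧
    (∀ i ≤ l, TendstoUniformlyOn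
      (fun (N : ℕ) (x : ℝ) => ∑ a ∈ Finset.range N,
        iteratedDerivWithin i
          (fun y => (1 / (((a : ℝ) + 1) + y) ^ 2) * f (1 / (((a : ℝ) + 1) + y)))
          (Set.Icc (0 : ℝ) 1) x)
      (iteratedDerivWithin i (gaussOp f) (Set.Icc (0 : ℝ) 1)) atTop (Set.Icc (0 : ℝ) 1)) ∧
    (∀ i ≤ l, TendstoUniformlyOn
      (fun (N : ℕ) (x : ℝ) => ∑ a ∈ Finset.range N,
        iteratedDerivWithin i
          (fun y => (1 / (((a : ℝ) + 1) + y) ^ 2) * f (1 - 1 / (((a : ℝ) + 1) + y)))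
          (Set.Icc (0 : ℝ) 1) x)
      (iteratedDerivWithin i (renyiOp f) (Set.Icc (0 : ℝ) 1)) atTop (Set.Icc (0 : ℝ) 1)) := by
  have hr : ContDiffOn ℝ l (fun z => f (1 - z)) (Set.Icc (0 : ℝ) 1) :=
    hf.comp (contDiffOn_const.sub contDiffOn_id)
      fun z hz => ⟨by linarith [hz.2], by linarith [hz.1]⟩
  have hgauss := termwiseContDiffOn_transferTerm hf
  have hrenyi := termwiseContDiffOn_transferTerm hr
  exact ⟨hgauss.tendstoUniformlyOn, hrenyi.tendstoUniformlyOn, hgauss.1, hrenyi.1, hgauss.2.1,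
    hrenyi.2.1, hgauss.2.2, hrenyi.2.2⟩
end

section
/- Fix an integer l ≥ 1. There exists M > 0 such that for every ε ∈ [0,1] and every f ∈ C^l([0,1]), max_{0 ≤ j ≤ l−1} sup_{x∈[0,1]} |((L_ε − L₀)f)^{(j)}(x)| ≤ 2 ε M · max_{0 ≤ j ≤ l−1} sup_{x∈[0,1]} |f^{(j)}(x)|. In particular, the operator norm of L_ε − L₀ from (C^l([0,1]), ‖·‖_{C^l}) to (C^{l−1}([0,1]), ‖·‖_{C^{l−1}}) tends to 0 as ε → 0. -/
open Filter Topology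

/-- The annealed transfer operator `L_ε f = (1-ε) L₀ f + ε L₁ f` of the
Gauss–Rényi random map. -/
noncomputable def annealedOp (ε : ℝ) (f : ℝ → ℝ) : ℝ → ℝ :=
  fun x => (1 - ε) * gaussOp f x + ε * renyiOp f x

/-!
Both `L₀` and `L₁` are series over the inverse branches `y ↦ c + d / (a + y)`, weighted by
`(a + y)⁻²`, and `L_ε - L₀ = ε (L₁ - L₀)`. Since `(1 / (a + y))' = -(1 / (a + y)) ^ 2`, the `j`-th
derivative of a branch term is a combination, with coefficients independent of `a`, of
`(1 / (a + y)) ^ (j + 2 + k) f⁽ᵏ⁾ (c + d / (a + y))` for `k ≤ j`. So it is `O(‖f‖_{C^j} / a²)`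
uniformly on `[0, 1]`, which justifies term-by-term differentiation and bounds
`‖(L₁ - L₀) f‖_{C^{l-1}}` by a multiple of `‖f‖_{C^{l-1}} ∑ 1 / a²`.
-/

open Set Asymptotics

section SeriesDerivatives

variable {F : Type*} [NormedAddCommGroup F] [NormedSpace ℝ F]
  {s : Set ℝ} {u u' : ℕ → ℝ → F} {b : ℕ → ℝ}

theorem Convex.norm_tsum_sub_tsum_le (hs : Convex ℝ s) (hb : Summable b)
    (hu : ∀ n, ∀ y ∈ s, HasDerivWithinAt (u n) (u' n y) s y) (hu' : ∀ n, ∀ y ∈ s, ‖u' n y‖ ≤ b n)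
    (hsum : ∀ y ∈ s, Summable (u · y)) {x y : ℝ} (hx : x ∈ s) (hy : y ∈ s) :
    ‖∑' n, u n y - ∑' n, u n x‖ ≤ (∑' n, b n) * ‖y - x‖ := by
  rw [← (hsum y hy).tsum_sub (hsum x hx)]
  exact tsum_of_norm_bounded (hb.hasSum.mul_right _)
    fun n => hs.norm_image_sub_le_of_norm_hasDerivWithin_le (hu n) (hu' n) hx hy

theorem Convex.hasDerivWithinAt_tsum [CompleteSpace F] (hs : Convex ℝ s) (hb : Summable b)
    (hu : ∀ n, ∀ y ∈ s, HasDerivWithinAt (u n) (u' n y) s y) (hu' : ∀ n, ∀ y ∈ s, ‖u' n y‖ ≤ b n)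
    (hsum : ∀ y ∈ s, Summable (u · y)) {x : ℝ} (hx : x ∈ s) :
    HasDerivWithinAt (fun y => ∑' n, u n y) (∑' n, u' n x) s x := by
  rw [hasDerivWithinAt_iff_isLittleO, isLittleO_iff]
  intro c hc
  -- Split off a finite head whose tail has total derivative bound below `c / 3`.
  obtain ⟨N, hN⟩ := ((tendsto_sum_nat_add b).eventually_lt_const (by positivity : 0 < c / 3)).exists
  have hhead : HasDerivWithinAt (fun y => ∑ n ∈ Finset.range N, u n y)
      (∑ n ∈ Finset.range N, u' n x) s x :=
    HasDerivWithinAt.fun_sum fun n _ => hu n x hx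
  filter_upwards [isLittleO_iff.mp (hasDerivWithinAt_iff_isLittleO.mp hhead)
    (by positivity : 0 < c / 3), self_mem_nhdsWithin] with y hhead_y hy
  have hb' : Summable fun n => b (n + N) := (summable_nat_add_iff N).mpr hb
  have hsum' : Summable fun n => u' n x :=
    Summable.of_norm_bounded hb fun n => hu' n x hx
  have htail : ‖∑' n, u (n + N) y - ∑' n, u (n + N) x‖ ≤ (∑' n, b (n + N)) * ‖y - x‖ :=
    hs.norm_tsum_sub_tsum_le hb' (fun n => hu (n + N)) (fun n => hu' (n + N))
      (fun z hz => (summable_nat_add_iff N).mpr (hsum z hz)) hx hy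
  have htail' : ‖(y - x) • ∑' n, u' (n + N) x‖ ≤ (∑' n, b (n + N)) * ‖y - x‖ := by
    rw [norm_smul, mul_comm]
    gcongr
    exact tsum_of_norm_bounded hb'.hasSum fun n => hu' (n + N) x hx
  rw [← (hsum y hy).sum_add_tsum_nat_add N, ← (hsum x hx).sum_add_tsum_nat_add N,
    ← hsum'.sum_add_tsum_nat_add N]
  calc ‖_‖ = ‖(∑ n ∈ Finset.range N, u n y - ∑ n ∈ Finset.range N, u n x
          - (y - x) • ∑ n ∈ Finset.range N, u' n x)
        + ((∑' n, u (n + N) y - ∑' n, u (n + N) x) - (y - x) • ∑' n, u' (n + N) x)‖ := by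
        rw [smul_add]; congr 1; abel
    _ ≤ c / 3 * ‖y - x‖ + ((∑' n, b (n + N)) * ‖y - x‖ + (∑' n, b (n + N)) * ‖y - x‖) :=
        (norm_add_le _ _).trans
          (add_le_add hhead_y ((norm_sub_le _ _).trans (add_le_add htail htail')))
    _ ≤ c * ‖y - x‖ := by nlinarith [norm_nonneg (y - x)]

theorem Convex.iteratedDerivWithin_tsum [CompleteSpace F] (hs : Convex ℝ s)
    (hs' : UniqueDiffOn ℝ s) {m : ℕ}
    (hu : ∀ n, ContDiffOn ℝ m (u n) s) {v : ℕ → ℕ → ℝ} (hv : ∀ j ≤ m, Summable (v j))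
    (hbd : ∀ j ≤ m, ∀ n, ∀ y ∈ s, ‖iteratedDerivWithin j (u n) s y‖ ≤ v j n) :
    ∀ j ≤ m, ∀ x ∈ s,
      iteratedDerivWithin j (fun y => ∑' n, u n y) s x = ∑' n, iteratedDerivWithin j (u n) s x := by
  intro j
  induction j with
  | zero => simp
  | succ j ih =>
    intro hj x hx
    have hderiv : ∀ n, ∀ y ∈ s, HasDerivWithinAt (iteratedDerivWithin j (u n) s)
        (iteratedDerivWithin (j + 1) (u n) s y) s y := fun n y hy => by
      rw [iteratedDerivWithin_succ]
      exact ((hu n).differentiableOn_iteratedDerivWithin (mod_cast hj) hs' y hy).hasDerivWithinAt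
    have hsum : ∀ y ∈ s, Summable fun n => iteratedDerivWithin j (u n) s y := fun y hy =>
      Summable.of_norm_bounded (hv j (by omega)) fun n => hbd j (by omega) n y hy
    rw [iteratedDerivWithin_succ, derivWithin_congr (ih (by omega)) (ih (by omega) x hx)]
    exact (hs.hasDerivWithinAt_tsum (hv (j + 1) hj) hderiv (hbd (j + 1) hj) hsum hx).derivWithin
      (hs' x hx)

end SeriesDerivatives

section BranchTerms

noncomputable def branchTerm (c d A : ℝ) (f : ℝ → ℝ) (y : ℝ) : ℝ :=
  (1 / (A + y)) ^ 2 * f (c + d * (1 / (A + y)))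

/-- The coefficients of `f⁽ᵏ⁾ (c + d τ) τ ^ (j + 2 + k)`, `τ = 1 / (A + y)`, in the `j`-th
derivative of `branchTerm c d A f`: since `τ' = -τ ^ 2`, differentiating `τ ^ m f⁽ᵏ⁾ (c + d τ)`
gives `-m τ ^ (m + 1) f⁽ᵏ⁾ (c + d τ) - d τ ^ (m + 2) f⁽ᵏ⁺¹⁾ (c + d τ)`. -/
def branchCoeff (d : ℝ) : ℕ → ℕ → ℝ
  | 0, 0 => 1
  | 0, _ + 1 => 0
  | j + 1, 0 => -(j + 2) * branchCoeff d j 0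
  | j + 1, k + 1 => -(j + k + 3) * branchCoeff d j (k + 1) - d * branchCoeff d j k

theorem branchCoeff_eq_zero_of_lt (d : ℝ) : ∀ {j k : ℕ}, j < k → branchCoeff d j k = 0
  | 0, _ + 1, _ => rfl
  | j + 1, k + 1, h => by
    simp only [branchCoeff, branchCoeff_eq_zero_of_lt d (by omega : j < k + 1),
      branchCoeff_eq_zero_of_lt d (by omega : j < k)]
    ring

theorem sum_branchCoeff_succ (d τ : ℝ) (G : ℕ → ℝ) (j : ℕ) :
    ∑ k ∈ Finset.range (j + 1 + 1), branchCoeff d (j + 1) k * τ ^ (j + 1 + 2 + k) * G k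
      = ∑ k ∈ Finset.range (j + 1), branchCoeff d j k *
          (-(((j + 2 + k : ℕ) : ℝ) * τ ^ (j + 2 + k + 1) * G k)
            - d * τ ^ (j + 2 + k + 2) * G (k + 1)) := by
  set H : ℕ → ℝ := fun k => -((j + 2 + k : ℕ) : ℝ) * branchCoeff d j k * τ ^ (j + 3 + k) * G k
  set E : ℕ → ℝ := fun k => -d * branchCoeff d j k * τ ^ (j + 4 + k) * G (k + 1)
  have hH : ∑ k ∈ Finset.range (j + 1), H (k + 1) + H 0 = ∑ k ∈ Finset.range (j + 1), H k := by
    rw [← Finset.sum_range_succ', Finset.sum_range_succ,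
      show H (j + 1) = 0 by simp [H, branchCoeff_eq_zero_of_lt d (Nat.lt_succ_self j)], add_zero]
  calc _ = ∑ k ∈ Finset.range (j + 1), (H (k + 1) + E k) + H 0 := by
        rw [Finset.sum_range_succ']
        congr 1
        · refine Finset.sum_congr rfl fun k _ => ?_
          simp only [H, E, branchCoeff]; push_cast; ring
        · simp only [H, branchCoeff]; push_cast; ring
    _ = ∑ k ∈ Finset.range (j + 1), (H k + E k) := by
        rw [Finset.sum_add_distrib, Finset.sum_add_distrib, ← hH]; ring
    _ = _ := Finset.sum_congr rfl fun k _ => by simp only [H, E]; ring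

def branchCoeffBound (d : ℝ) (j : ℕ) : ℝ :=
  ∑ k ∈ Finset.range (j + 1), |branchCoeff d j k|

theorem branchCoeffBound_nonneg (d : ℝ) (j : ℕ) : 0 ≤ branchCoeffBound d j :=
  Finset.sum_nonneg fun _ _ => abs_nonneg _

variable {s t : Set ℝ} {c d A : ℝ}

theorem hasDerivWithinAt_pow_mul_comp_branch {g : ℝ → ℝ} {g' y : ℝ} (hy : A + y ≠ 0)
    (hg : HasDerivWithinAt g g' t (c + d * (1 / (A + y))))
    (hmaps : MapsTo (fun z => c + d * (1 / (A + z))) s t) (m : ℕ) :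
    HasDerivWithinAt (fun z => (1 / (A + z)) ^ m * g (c + d * (1 / (A + z))))
      (-((m : ℝ) * (1 / (A + y)) ^ (m + 1) * g (c + d * (1 / (A + y))))
        - d * (1 / (A + y)) ^ (m + 2) * g') s y := by
  have hτ : HasDerivAt (fun z => 1 / (A + z)) (-(1 / (A + y)) ^ 2) y := by
    simp only [one_div]
    exact (((hasDerivAt_id' y).const_add A).fun_inv hy).congr_deriv
      (by rw [inv_pow, neg_div, one_div])
  have hcomp := hg.comp y ((hτ.const_mul d).const_add c).hasDerivWithinAt hmaps
  refine ((hτ.fun_pow m).hasDerivWithinAt.fun_mul hcomp).congr_deriv ?_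
  rcases m with _ | m
  · simp only [Function.comp_apply]; ring
  · simp only [Function.comp_apply]; push_cast; ring

theorem contDiffOn_branchTerm (hA : ∀ y ∈ s, A + y ≠ 0)
    (hmaps : MapsTo (fun y => c + d * (1 / (A + y))) s t) {n : ℕ} {f : ℝ → ℝ}
    (hf : ContDiffOn ℝ n f t) : ContDiffOn ℝ n (branchTerm c d A f) s := by
  have hτ : ContDiffOn ℝ n (fun y => 1 / (A + y)) s :=
    contDiffOn_const.div (contDiffOn_const.add contDiffOn_id) hA
  exact (hτ.pow 2).mul (hf.comp (contDiffOn_const.add (contDiffOn_const.mul hτ)) hmaps)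

theorem iteratedDerivWithin_branchTerm (hs : UniqueDiffOn ℝ s) (ht : UniqueDiffOn ℝ t)
    (hA : ∀ y ∈ s, A + y ≠ 0) (hmaps : MapsTo (fun y => c + d * (1 / (A + y))) s t)
    {n : ℕ} {f : ℝ → ℝ} (hf : ContDiffOn ℝ n f t) :
    ∀ j ≤ n, ∀ y ∈ s, iteratedDerivWithin j (branchTerm c d A f) s y
      = ∑ k ∈ Finset.range (j + 1), branchCoeff d j k * (1 / (A + y)) ^ (j + 2 + k)
          * iteratedDerivWithin k f t (c + d * (1 / (A + y))) := by
  intro j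
  induction j with
  | zero => simp [branchTerm, branchCoeff]
  | succ j ih =>
    intro hj y hy
    have hterm : ∀ k ∈ Finset.range (j + 1), HasDerivWithinAt
        (fun z => branchCoeff d j k * (1 / (A + z)) ^ (j + 2 + k)
          * iteratedDerivWithin k f t (c + d * (1 / (A + z))))
        (branchCoeff d j k * (-(((j + 2 + k : ℕ) : ℝ) * (1 / (A + y)) ^ (j + 2 + k + 1)
            * iteratedDerivWithin k f t (c + d * (1 / (A + y))))
          - d * (1 / (A + y)) ^ (j + 2 + k + 2)
            * iteratedDerivWithin (k + 1) f t (c + d * (1 / (A + y))))) s y := by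
      intro k hk
      have hk : k < n := by rw [Finset.mem_range] at hk; omega
      have hfk := (hf.differentiableOn_iteratedDerivWithin (mod_cast hk) ht _
        (hmaps hy)).hasDerivWithinAt
      rw [← iteratedDerivWithin_succ] at hfk
      simpa only [mul_assoc] using
        (hasDerivWithinAt_pow_mul_comp_branch (hA y hy) hfk hmaps (j + 2 + k)).const_mul
          (branchCoeff d j k)
    rw [iteratedDerivWithin_succ, derivWithin_congr (ih (by omega)) (ih (by omega) y hy),
      (HasDerivWithinAt.fun_sum hterm).derivWithin (hs y hy), sum_branchCoeff_succ]

theorem abs_iteratedDerivWithin_branchTerm_le (hs : UniqueDiffOn ℝ s) (ht : UniqueDiffOn ℝ t)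
    (hA : 1 ≤ A) (hs₀ : s ⊆ Ici 0) (hmaps : MapsTo (fun y => c + d * (1 / (A + y))) s t)
    {n : ℕ} {f : ℝ → ℝ} (hf : ContDiffOn ℝ n f t) {j : ℕ} (hj : j ≤ n) {K : ℝ}
    (hK : ∀ k ≤ j, ∀ z ∈ t, |iteratedDerivWithin k f t z| ≤ K) {y : ℝ} (hy : y ∈ s) :
    |iteratedDerivWithin j (branchTerm c d A f) s y| ≤ branchCoeffBound d j * K / A ^ 2 := by
  have hy₀ : 0 ≤ y := hs₀ hy
  have hA' : ∀ z ∈ s, A + z ≠ 0 := fun z hz => by have : (0:ℝ) ≤ z := hs₀ hz; linarith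
  have hτ₀ : 0 ≤ 1 / (A + y) := by positivity
  have hτA : 1 / (A + y) ≤ 1 / A := one_div_le_one_div_of_le (by linarith) (by linarith)
  have hτ₁ : 1 / (A + y) ≤ 1 := hτA.trans (div_le_one_of_le₀ hA (by linarith))
  rw [iteratedDerivWithin_branchTerm hs ht hA' hmaps hf j hj y hy, branchCoeffBound,
    Finset.sum_mul, Finset.sum_div]
  refine (Finset.abs_sum_le_sum_abs _ _).trans (Finset.sum_le_sum fun k hk => ?_)
  have hk : k ≤ j := Nat.lt_succ_iff.mp (Finset.mem_range.mp hk)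
  have hpow : (1 / (A + y)) ^ (j + 2 + k) ≤ 1 / A ^ 2 := by
    rw [← one_div_pow]
    exact (pow_le_pow_of_le_one hτ₀ hτ₁ (by omega : 2 ≤ j + 2 + k)).trans (by gcongr)
  rw [abs_mul, abs_mul, abs_of_nonneg (pow_nonneg hτ₀ _)]
  calc _ ≤ |branchCoeff d j k| * (1 / A ^ 2) * K := by
        gcongr
        exact hK k hk _ (hmaps hy)
    _ = _ := by ring

end BranchTerms

noncomputable def inverseSquareSum : ℝ := ∑' a : ℕ, 1 / ((a : ℝ) + 1) ^ 2

theorem summable_div_nat_add_one_sq (C : ℝ) : Summable fun a : ℕ => C / ((a : ℝ) + 1) ^ 2 :=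
  (((summable_nat_add_iff 1).mpr (Real.summable_one_div_nat_pow.mpr one_lt_two)).mul_left C).congr
    fun a => by push_cast; ring

theorem gaussOp_eq_tsum_branchTerm (f : ℝ → ℝ) (y : ℝ) :
    gaussOp f y = ∑' a : ℕ, branchTerm 0 1 ((a : ℝ) + 1) f y := by
  simp [gaussOp, branchTerm]

theorem renyiOp_eq_tsum_branchTerm (f : ℝ → ℝ) (y : ℝ) :
    renyiOp f y = ∑' a : ℕ, branchTerm 1 (-1) ((a : ℝ) + 1) f y := by
  simp [renyiOp, branchTerm, sub_eq_add_neg]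

theorem annealedOp_sub_gaussOp (ε : ℝ) (f : ℝ → ℝ) (y : ℝ) :
    annealedOp ε f y - gaussOp f y = ε * (renyiOp f y - gaussOp f y) := by
  simp only [annealedOp]; ring

section SupNorm

/-- `max_{j < n} sup_{[0,1]} |f⁽ʲ⁾|`, i.e. the `C^{n-1}` norm. -/
noncomputable def iteratedDerivSupNorm (n : ℕ) (f : ℝ → ℝ) : ℝ :=
  ⨆ j : Fin n, ⨆ x : Icc (0 : ℝ) 1, |iteratedDerivWithin j f (Icc 0 1) x|

variable {n : ℕ} {f : ℝ → ℝ}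

theorem iteratedDerivSupNorm_nonneg : 0 ≤ iteratedDerivSupNorm n f :=
  Real.iSup_nonneg fun _ => Real.iSup_nonneg fun _ => abs_nonneg _

theorem abs_iteratedDerivWithin_le_iteratedDerivSupNorm {j : ℕ} (hf : ContDiffOn ℝ j f (Icc 0 1))
    (hj : j < n) {x : ℝ} (hx : x ∈ Icc (0 : ℝ) 1) :
    |iteratedDerivWithin j f (Icc 0 1) x| ≤ iteratedDerivSupNorm n f := by
  obtain ⟨C, hC⟩ := isCompact_Icc.exists_bound_of_continuousOn
    (hf.continuousOn_iteratedDerivWithin le_rfl (uniqueDiffOn_Icc zero_lt_one))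
  have hbdd : BddAbove (range fun x : Icc (0 : ℝ) 1 => |iteratedDerivWithin j f (Icc 0 1) x|) :=
    ⟨C, by rintro _ ⟨z, rfl⟩; exact hC z z.2⟩
  exact (le_ciSup hbdd ⟨x, hx⟩).trans
    (le_ciSup (f := fun i : Fin n => ⨆ x : Icc (0 : ℝ) 1,
      |iteratedDerivWithin i f (Icc 0 1) x|) (finite_range _).bddAbove ⟨j, hj⟩)

theorem iteratedDerivSupNorm_le {C : ℝ} (hC : 0 ≤ C)
    (h : ∀ j < n, ∀ x ∈ Icc (0 : ℝ) 1, |iteratedDerivWithin j f (Icc 0 1) x| ≤ C) :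
    iteratedDerivSupNorm n f ≤ C :=
  Real.iSup_le (fun j => Real.iSup_le (fun x => h j j.2 x x.2) hC) hC

theorem iteratedDerivSupNorm_le_succ : iteratedDerivSupNorm n f ≤ iteratedDerivSupNorm (n + 1) f :=
  Real.iSup_le (fun j => le_ciSup (f := fun i : Fin (n + 1) => ⨆ x : Icc (0 : ℝ) 1,
      |iteratedDerivWithin i f (Icc 0 1) x|) (finite_range _).bddAbove j.castSucc)
    iteratedDerivSupNorm_nonneg

end SupNorm

section TransferOperators

variable {f : ℝ → ℝ}

theorem mapsTo_gaussBranch (a : ℕ) :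
    MapsTo (fun y => 0 + 1 * (1 / (((a : ℝ) + 1) + y))) (Icc 0 1) (Icc 0 1) := fun y hy => by
  have : (1 : ℝ) ≤ a + 1 + y := by linarith [hy.1, (a.cast_nonneg : (0 : ℝ) ≤ a)]
  simp only [zero_add, one_mul]
  exact ⟨by positivity, div_le_one_of_le₀ this (by linarith)⟩

theorem mapsTo_renyiBranch (a : ℕ) :
    MapsTo (fun y => 1 + -1 * (1 / (((a : ℝ) + 1) + y))) (Icc 0 1) (Icc 0 1) := fun y hy => by
  obtain ⟨h₀, h₁⟩ := mapsTo_gaussBranch a hy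
  simp only [zero_add, one_mul] at h₀ h₁
  constructor <;> linarith

theorem nat_add_one_add_ne_zero (a : ℕ) {y : ℝ} (hy : y ∈ Icc (0 : ℝ) 1) : (a : ℝ) + 1 + y ≠ 0 := by
  have := hy.1; positivity

theorem abs_iteratedDerivWithin_renyiBranch_sub_gaussBranch_le {j : ℕ}
    (hf : ContDiffOn ℝ j f (Icc 0 1)) {K : ℝ}
    (hK : ∀ k ≤ j, ∀ z ∈ Icc (0 : ℝ) 1, |iteratedDerivWithin k f (Icc 0 1) z| ≤ K)
    (a : ℕ) {y : ℝ} (hy : y ∈ Icc (0 : ℝ) 1) :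
    |iteratedDerivWithin j (branchTerm 1 (-1) ((a : ℝ) + 1) f - branchTerm 0 1 ((a : ℝ) + 1) f)
        (Icc 0 1) y|
      ≤ (branchCoeffBound (-1) j + branchCoeffBound 1 j) * K / ((a : ℝ) + 1) ^ 2 := by
  have hI : UniqueDiffOn ℝ (Icc (0 : ℝ) 1) := uniqueDiffOn_Icc zero_lt_one
  have hA : (1 : ℝ) ≤ a + 1 := le_add_of_nonneg_left a.cast_nonneg
  rw [iteratedDerivWithin_sub hy hI
    (contDiffOn_branchTerm (fun _ => nat_add_one_add_ne_zero a) (mapsTo_renyiBranch a) hf y hy)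
    (contDiffOn_branchTerm (fun _ => nat_add_one_add_ne_zero a) (mapsTo_gaussBranch a) hf y hy),
    add_mul, add_div]
  exact (abs_sub _ _).trans (add_le_add
    (abs_iteratedDerivWithin_branchTerm_le hI hI hA Icc_subset_Ici_self (mapsTo_renyiBranch a) hf
      le_rfl hK hy)
    (abs_iteratedDerivWithin_branchTerm_le hI hI hA Icc_subset_Ici_self (mapsTo_gaussBranch a) hf
      le_rfl hK hy))

theorem summable_branchTerm {c d : ℝ}
    (hmaps : ∀ a : ℕ, MapsTo (fun y => c + d * (1 / (((a : ℝ) + 1) + y))) (Icc 0 1) (Icc 0 1))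
    (hf : ContinuousOn f (Icc 0 1)) {y : ℝ} (hy : y ∈ Icc (0 : ℝ) 1) :
    Summable fun a : ℕ => branchTerm c d ((a : ℝ) + 1) f y := by
  have hI : UniqueDiffOn ℝ (Icc (0 : ℝ) 1) := uniqueDiffOn_Icc zero_lt_one
  obtain ⟨K, hK⟩ := isCompact_Icc.exists_bound_of_continuousOn hf
  refine Summable.of_norm_bounded (summable_div_nat_add_one_sq (branchCoeffBound d 0 * K))
    fun a => ?_
  simpa using abs_iteratedDerivWithin_branchTerm_le hI hI (le_add_of_nonneg_left a.cast_nonneg)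
    Icc_subset_Ici_self (hmaps a) (n := 0) (contDiffOn_zero.mpr hf) le_rfl
    (fun k hk z hz => by simpa [Nat.le_zero.mp hk] using hK z hz) hy

theorem renyiOp_sub_gaussOp_eq_tsum (hf : ContinuousOn f (Icc 0 1)) {y : ℝ}
    (hy : y ∈ Icc (0 : ℝ) 1) :
    renyiOp f y - gaussOp f y
      = ∑' a : ℕ, (branchTerm 1 (-1) ((a : ℝ) + 1) f - branchTerm 0 1 ((a : ℝ) + 1) f) y := by
  rw [renyiOp_eq_tsum_branchTerm, gaussOp_eq_tsum_branchTerm,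
    ← (summable_branchTerm mapsTo_renyiBranch hf hy).tsum_sub
      (summable_branchTerm mapsTo_gaussBranch hf hy)]
  rfl

theorem abs_iteratedDerivWithin_annealedOp_sub_gaussOp_le {l : ℕ}
    (hf : ContDiffOn ℝ l f (Icc 0 1)) (ε : ℝ) {j : ℕ} (hj : j < l) {x : ℝ}
    (hx : x ∈ Icc (0 : ℝ) 1) :
    |iteratedDerivWithin j (fun y => annealedOp ε f y - gaussOp f y) (Icc 0 1) x|
      ≤ |ε| * ((branchCoeffBound (-1) j + branchCoeffBound 1 j) * inverseSquareSum
        * iteratedDerivSupNorm l f) := by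
  set K := iteratedDerivSupNorm l f
  set v : ℕ → ℕ → ℝ := fun i a =>
    (branchCoeffBound (-1) i + branchCoeffBound 1 i) * K / ((a : ℝ) + 1) ^ 2
  have hfj : ContDiffOn ℝ j f (Icc 0 1) := hf.of_le (mod_cast hj.le)
  have hbd : ∀ i ≤ j, ∀ a : ℕ, ∀ y ∈ Icc (0 : ℝ) 1, ‖iteratedDerivWithin i
      (branchTerm 1 (-1) ((a : ℝ) + 1) f - branchTerm 0 1 ((a : ℝ) + 1) f) (Icc 0 1) y‖ ≤ v i a :=
    fun i hi a y hy => abs_iteratedDerivWithin_renyiBranch_sub_gaussBranch_le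
      (hfj.of_le (mod_cast hi)) (fun k hk z hz => abs_iteratedDerivWithin_le_iteratedDerivSupNorm
        (hf.of_le (mod_cast (by omega : k ≤ l))) (by omega) hz) a hy
  have hsmooth : ∀ a : ℕ, ContDiffOn ℝ j
      (branchTerm 1 (-1) ((a : ℝ) + 1) f - branchTerm 0 1 ((a : ℝ) + 1) f) (Icc 0 1) := fun a =>
    (contDiffOn_branchTerm (fun _ => nat_add_one_add_ne_zero a) (mapsTo_renyiBranch a) hfj).sub
      (contDiffOn_branchTerm (fun _ => nat_add_one_add_ne_zero a) (mapsTo_gaussBranch a) hfj)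
  have hv : ∀ i ≤ j, Summable (v i) := fun i _ => summable_div_nat_add_one_sq _
  have htsum : ∑' a, v j a
      = (branchCoeffBound (-1) j + branchCoeffBound 1 j) * inverseSquareSum * K := by
    simp only [v, inverseSquareSum]
    rw [← tsum_mul_left, ← tsum_mul_right]
    exact tsum_congr fun a => by ring
  rw [iteratedDerivWithin_congr (fun y hy => (annealedOp_sub_gaussOp ε f y).trans
      (congrArg (ε * ·) (renyiOp_sub_gaussOp_eq_tsum hf.continuousOn hy))) hx,
    iteratedDerivWithin_const_mul_field, (convex_Icc 0 1).iteratedDerivWithin_tsum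
      (uniqueDiffOn_Icc zero_lt_one) hsmooth hv hbd j le_rfl x hx, abs_mul, ← htsum]
  gcongr
  exact tsum_of_norm_bounded (hv j le_rfl).hasSum fun a => hbd j le_rfl a x hx

end TransferOperators

theorem exists_iteratedDerivSupNorm_annealedOp_sub_gaussOp_le (l : ℕ) :
    ∃ M : ℝ, 0 < M ∧ ∀ ε ∈ Icc (0 : ℝ) 1, ∀ f : ℝ → ℝ, ContDiffOn ℝ l f (Icc 0 1) →
      iteratedDerivSupNorm l (fun y => annealedOp ε f y - gaussOp f y)
        ≤ 2 * ε * M * iteratedDerivSupNorm l f := by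
  set B : ℕ → ℝ := fun j => (branchCoeffBound (-1) j + branchCoeffBound 1 j) * inverseSquareSum
  have hB : ∀ j, 0 ≤ B j := fun j =>
    mul_nonneg (add_nonneg (branchCoeffBound_nonneg _ _) (branchCoeffBound_nonneg _ _))
      (tsum_nonneg fun _ => by positivity)
  have hsum : 0 ≤ ∑ j ∈ Finset.range l, B j := Finset.sum_nonneg fun j _ => hB j
  refine ⟨1 + ∑ j ∈ Finset.range l, B j, by linarith, fun ε hε f hf => ?_⟩
  have hε₀ := hε.1
  have hK : 0 ≤ iteratedDerivSupNorm l f := iteratedDerivSupNorm_nonneg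
  refine iteratedDerivSupNorm_le (by positivity) fun j hj x hx => ?_
  have hBM : B j ≤ 2 * (1 + ∑ j ∈ Finset.range l, B j) := by
    linarith [Finset.single_le_sum (fun i _ => hB i) (Finset.mem_range.mpr hj)]
  calc _ ≤ |ε| * (B j * iteratedDerivSupNorm l f) :=
        abs_iteratedDerivWithin_annealedOp_sub_gaussOp_le hf ε hj hx
    _ ≤ ε * (2 * (1 + ∑ j ∈ Finset.range l, B j) * iteratedDerivSupNorm l f) := by
        rw [abs_of_nonneg hε₀]; gcongr
    _ = _ := by ring

theorem stmt12_general (l : ℕ) :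
    ∃ M : ℝ, 0 < M ∧
      (∀ ε ∈ Set.Icc (0 : ℝ) 1, ∀ f : ℝ → ℝ, ContDiffOn ℝ l f (Set.Icc (0 : ℝ) 1) →
        (⨆ j : Fin l, ⨆ x : Set.Icc (0 : ℝ) 1,
            |iteratedDerivWithin j (fun y => annealedOp ε f y - gaussOp f y)
              (Set.Icc (0 : ℝ) 1) x|) ≤
          2 * ε * M * ⨆ j : Fin l, ⨆ x : Set.Icc (0 : ℝ) 1,
            |iteratedDerivWithin j f (Set.Icc (0 : ℝ) 1) x|) ∧
      Tendsto (fun ε : ℝ =>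
          ⨆ f : {f : ℝ → ℝ // ContDiffOn ℝ l f (Set.Icc (0 : ℝ) 1) ∧
              (⨆ j : Fin (l + 1), ⨆ x : Set.Icc (0 : ℝ) 1,
                |iteratedDerivWithin j f (Set.Icc (0 : ℝ) 1) x|) ≤ 1},
            ⨆ j : Fin l, ⨆ x : Set.Icc (0 : ℝ) 1,
              |iteratedDerivWithin j (fun y => annealedOp ε f.1 y - gaussOp f.1 y)
                (Set.Icc (0 : ℝ) 1) x|)
        (𝓝[≥] 0) (𝓝 0) := by
  obtain ⟨M, hM, hest⟩ := exists_iteratedDerivSupNorm_annealedOp_sub_gaussOp_le l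
  refine ⟨M, hM, hest, ?_⟩
  have hlim : Tendsto (fun ε : ℝ => 2 * ε * M) (𝓝[≥] 0) (𝓝 0) :=
    tendsto_nhdsWithin_of_tendsto_nhds
      (by simpa using ((tendsto_id (x := 𝓝 (0 : ℝ))).const_mul 2).mul_const M)
  refine tendsto_of_tendsto_of_tendsto_of_le_of_le' tendsto_const_nhds hlim
    (Eventually.of_forall fun ε => Real.iSup_nonneg fun _ => iteratedDerivSupNorm_nonneg) ?_
  filter_upwards [Icc_mem_nhdsGE zero_lt_one] with ε hε
  have h2εM : 0 ≤ 2 * ε * M := by have := hε.1; positivity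
  refine Real.iSup_le (fun f => (hest ε hε f.1 f.2.1).trans ?_) h2εM
  exact (mul_le_mul_of_nonneg_left (iteratedDerivSupNorm_le_succ.trans f.2.2) h2εM).trans_eq
    (mul_one _)

/-- **Keller–Liverani perturbation estimate**: there is `M > 0` with
`‖(L_ε - L₀) f‖_{C^{l-1}} ≤ 2 ε M ‖f‖_{C^{l-1}}` for all `ε ∈ [0,1]` and
`f ∈ C^l([0,1])`; in particular the operator norm of `L_ε - L₀` from
`C^l([0,1])` to `C^{l-1}([0,1])` tends to `0` as `ε → 0`. -/
theorem stmt12 (l : ℕ) (hl : 1 ≤ l) :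
    ∃ M : ℝ, 0 < M ∧
      (∀ ε ∈ Set.Icc (0 : ℝ) 1, ∀ f : ℝ → ℝ, ContDiffOn ℝ l f (Set.Icc (0 : ℝ) 1) →
        (⨆ j : Fin l, ⨆ x : Set.Icc (0 : ℝ) 1,
            |iteratedDerivWithin j (fun y => annealedOp ε f y - gaussOp f y)
              (Set.Icc (0 : ℝ) 1) x|) ≤
          2 * ε * M * ⨆ j : Fin l, ⨆ x : Set.Icc (0 : ℝ) 1,
            |iteratedDerivWithin j f (Set.Icc (0 : ℝ) 1) x|) ∧
      Tendsto (fun ε : ℝ =>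
          ⨆ f : {f : ℝ → ℝ // ContDiffOn ℝ l f (Set.Icc (0 : ℝ) 1) ∧
              (⨆ j : Fin (l + 1), ⨆ x : Set.Icc (0 : ℝ) 1,
                |iteratedDerivWithin j f (Set.Icc (0 : ℝ) 1) x|) ≤ 1},
            ⨆ j : Fin l, ⨆ x : Set.Icc (0 : ℝ) 1,
              |iteratedDerivWithin j (fun y => annealedOp ε f.1 y - gaussOp f.1 y)
                (Set.Icc (0 : ℝ) 1) x|)
        (𝓝[≥] 0) (𝓝 0) :=
  stmt12_general l
end

section
/- Let X be a real Banach space, X₀ ⊆ X a closed subspace, ε₀ > 0, k ≥ 1 an integer, L₀ and L₁ bounded linear operators on X, and for ε ∈ [0, ε₀) set L_ε = (1−ε)L₀ + εL₁. Suppose L_ε maps X₀ into X₀, h_ε ∈ X satisfies L_ε h_ε = h_ε with h_ε − h₀ ∈ X₀, and (I − L_ε) restricted to X₀ is a bijection of X₀ whose inverse R_ε satisfies sup_{ε∈[0,ε₀)} ‖R_ε‖ < ∞. Suppose G₁ := L₁h₀ − h₀ ∈ X₀ and there exist H₀, …, H_{k−1} ∈ X with ‖R_ε G₁ − Σ_{j=0}^{k−1}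 (ε^j/j!) H_j‖ = o(ε^{k−1}) as ε → 0⁺. Then ‖h_ε − h₀ − Σ_{n=1}^k (εⁿ/(n−1)!) H_{n−1}‖ = o(ε^k) as ε → 0⁺. -/
open Filter Topology

/-- **k-th order approximation for convex-combination families** (equation (4.1)):
for `L_ε = (1-ε)L₀ + εL₁` with fixed points `h ε`, uniformly bounded inverses
`R ε` of `(I - L_ε)` on the closed zero-average subspace `X₀`, and a `(k-1)`-th
order expansion `R_ε G₁ = Σ_{j=0}^{k-1} (ε^j/j!) H_j + o(ε^{k-1})` of
`G₁ = L₁h₀ - h₀`, one has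
`h_ε = h₀ + Σ_{n=1}^k (εⁿ/(n-1)!) H_{n-1} + o(ε^k)` as `ε → 0⁺`. -/
theorem stmt13
    {X : Type*} [NormedAddCommGroup X] [NormedSpace ℝ X] [CompleteSpace X]
    (X₀ : Submodule ℝ X) (hX₀ : IsClosed (X₀ : Set X))
    (ε₀ : ℝ) (hε₀ : 0 < ε₀) (k : ℕ) (hk : 1 ≤ k)
    (L₀ L₁ : X →L[ℝ] X) (h : ℝ → X)
    (hLmap : ∀ ε ∈ Set.Ico (0 : ℝ) ε₀, ∀ v ∈ X₀, ((1 - ε) • L₀ + ε • L₁) v ∈ X₀)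
    (hfix : ∀ ε ∈ Set.Ico (0 : ℝ) ε₀, ((1 - ε) • L₀ + ε • L₁) (h ε) = h ε)
    (hdiff : ∀ ε ∈ Set.Ico (0 : ℝ) ε₀, h ε - h 0 ∈ X₀)
    (R : ℝ → X₀ →L[ℝ] X₀)
    (hR : ∀ ε ∈ Set.Ico (0 : ℝ) ε₀, ∀ v w : X₀,
      R ε w = v ↔ (v : X) - ((1 - ε) • L₀ + ε • L₁) v = (w : X))
    (C : ℝ) (hC : ∀ ε ∈ Set.Ico (0 : ℝ) ε₀, ‖R ε‖ ≤ C)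
    (hG : L₁ (h 0) - h 0 ∈ X₀)
    (H : ℕ → X)
    (hH : Tendsto (fun ε : ℝ =>
        ‖((R ε ⟨L₁ (h 0) - h 0, hG⟩ : X₀) : X) -
          ∑ j ∈ Finset.range k, (ε ^ j / (Nat.factorial j : ℝ)) • H j‖ / ε ^ (k - 1))
      (𝓝[>] 0) (𝓝 0)) :
    Tendsto (fun ε : ℝ =>
        ‖h ε - h 0 -
          ∑ n ∈ Finset.Icc 1 k, (ε ^ n / (Nat.factorial (n - 1) : ℝ)) • H (n - 1)‖ / ε ^ k)
      (𝓝[>] 0) (𝓝 0) := by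
  have h0fix : L₀ (h 0) = h 0 := by
    have := hfix 0 ⟨le_refl 0, hε₀⟩
    simpa using this
  apply hH.congr'
  filter_upwards [Ioo_mem_nhdsGT_of_mem (Set.left_mem_Ico.mpr hε₀)] with ε hε
  obtain ⟨hε1, hε2⟩ := hε
  have hmem : ε ∈ Set.Ico (0:ℝ) ε₀ := ⟨hε1.le, hε2⟩
  set G : X₀ := ⟨L₁ (h 0) - h 0, hG⟩ with hGdef
  have key : (h ε - h 0 : X) = ε • ((R ε G : X₀) : X) := by
    have hv : R ε (ε • G) = ⟨h ε - h 0, hdiff ε hmem⟩ := by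
      rw [hR ε hmem]
      have hfe := hfix ε hmem
      push_cast [hGdef]
      simp only [ContinuousLinearMap.add_apply, ContinuousLinearMap.smul_apply,
        ContinuousLinearMap.coe_add', ContinuousLinearMap.coe_smul', Pi.add_apply,
        Pi.smul_apply, map_sub] at hfe ⊢
      set a := L₀ (h ε) with ha
      set b := L₁ (h ε) with hb
      rw [h0fix, ← hfe]
      module
    have : ((R ε (ε • G) : X₀) : X) = h ε - h 0 := by rw [hv]
    rw [map_smul] at this
    rw [← this]; rfl
  have hsum : ∑ n ∈ Finset.Icc 1 k, (ε ^ n / (Nat.factorial (n - 1) : ℝ)) • H (n - 1)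
      = ε • ∑ j ∈ Finset.range k, (ε ^ j / (Nat.factorial j : ℝ)) • H j := by
    rw [Finset.smul_sum, ← Finset.Ico_add_one_right_eq_Icc, Finset.sum_Ico_eq_sum_range]
    simp only [Nat.add_sub_cancel_left, Nat.add_sub_cancel, Nat.succ_sub_one, smul_smul]
    apply Finset.sum_congr rfl
    intro j _
    congr 1
    rw [pow_add, pow_one]
    ring
  have hkpow : ε ^ k = ε * ε ^ (k-1) := by
    conv_lhs => rw [show k = 1 + (k-1) from (Nat.add_sub_cancel' hk).symm]
    rw [pow_add, pow_one]
  rw [key, hsum, ← smul_sub, norm_smul, Real.norm_eq_abs, abs_of_pos hε1,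
    hkpow, mul_div_mul_left _ _ (ne_of_gt hε1)]
end
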